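/- arXiv:math/0501265 — 5 statements merged into one kernel-verified Lean document; each statement's English description precedes it below -/
import Mathlib

section
/- Let O ⊂ ℝⁿ be open and bounded, and let f : ℝ^d × O × ℝ^{n×m} → ℝⁿ satisfy: there is L' > 0 such that for all b,b' ∈ ℝ^d, x,x' ∈ O and n×m real matrices z,z', ‖f(b,x,z) − f(b',x',z')‖ ≤ L'((‖b−b'‖ + ‖x−x'‖)(1 + ‖z‖ + ‖z'‖) + ‖z−z'‖) (Frobenius norms on matrices), and there are x₀ ∈ O and L₂ > 0 with ‖f(b,x₀,0)‖ ≤ L₂ for all b. Let φ : ℝⁿ → [0,1] be C^∞ with compact support contained in O, and define f̃(b,x,z) = φ(x)·f(b,x,z) for x ∈ O and f̃(b,x,z) = 0 for x ∉ O. Let ε ∈ (0,1), let s : ℝ → ℝ be a C^∞ nondecreasing function with s(t) = 0 if and only if t ≤ 1/ε and s affine with positive slope near ∞, and set z̄ = z/(1 + s(‖z‖)). Then the map (b,x,z) ↦ f̃(b,x,z̄) is bounded and Lipschitz on ℝ^d × ℝⁿ × ℝ^{n×m}. -/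
set_option maxHeartbeats 1000000 in
open scoped Classical in
/-- Lemma 4.1 (iv): the cut-off drift `f̃(b,x,z) = φ(x) f(b,x,z)` (extended by
`0` outside `O`) composed with the truncation `z ↦ z̄ = z/(1 + s ‖z‖)` is
bounded and Lipschitz on the whole space. -/
theorem stmt_6 (n m d : ℕ)
    (O : Set (EuclideanSpace ℝ (Fin n))) (hO : IsOpen O)
    (hObd : Bornology.IsBounded O)
    (f : EuclideanSpace ℝ (Fin d) → EuclideanSpace ℝ (Fin n) →
      EuclideanSpace ℝ (Fin n × Fin m) → EuclideanSpace ℝ (Fin n))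
    (L' : ℝ) (hL' : 0 < L')
    (hf_lip : ∀ b b', ∀ x ∈ O, ∀ x' ∈ O, ∀ z z',
      ‖f b x z - f b' x' z'‖ ≤
        L' * ((‖b - b'‖ + ‖x - x'‖) * (1 + ‖z‖ + ‖z'‖) + ‖z - z'‖))
    (x₀ : EuclideanSpace ℝ (Fin n)) (hx₀ : x₀ ∈ O)
    (L₂ : ℝ) (hL₂ : 0 < L₂) (hf_bd : ∀ b, ‖f b x₀ 0‖ ≤ L₂)
    (φ : EuclideanSpace ℝ (Fin n) → ℝ) (hφ : ContDiff ℝ (⊤ : ℕ∞) φ)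
    (hφ_supp : HasCompactSupport φ) (hφ_suppO : tsupport φ ⊆ O)
    (hφ_range : ∀ x, φ x ∈ Set.Icc (0:ℝ) 1)
    (ε : ℝ) (hε : ε ∈ Set.Ioo (0:ℝ) 1)
    (s : ℝ → ℝ) (hs_smooth : ContDiff ℝ (⊤ : ℕ∞) s) (hs_mono : Monotone s)
    (hs_zero : ∀ t, s t = 0 ↔ t ≤ 1 / ε)
    (t₀ : ℝ) (ht₀ : 1 / ε < t₀)
    (m₀ q : ℝ) (hm₀ : 0 < m₀) (hs_affine : ∀ t, t₀ ≤ t → s t = m₀ * t + q)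
    (G : EuclideanSpace ℝ (Fin d) × EuclideanSpace ℝ (Fin n) ×
      EuclideanSpace ℝ (Fin n × Fin m) → EuclideanSpace ℝ (Fin n))
    (hG : ∀ p, G p = if p.2.1 ∈ O
      then φ p.2.1 • f p.1 p.2.1 ((1 + s ‖p.2.2‖)⁻¹ • p.2.2) else 0) :
    (∃ M : ℝ, ∀ p, ‖G p‖ ≤ M) ∧ ∃ L : NNReal, LipschitzWith L G := by
  -- ε and t₀ basics
  have hε0 : 0 < ε := hε.1
  have hεinv : (0:ℝ) < 1 / ε := by positivity
  have ht₀pos : 0 < t₀ := lt_trans hεinv ht₀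
  -- s is nonnegative
  have hsnn : ∀ t, 0 ≤ s t := by
    intro t
    rcases le_or_gt t (1/ε) with h | h
    · exact le_of_eq ((hs_zero t).mpr h).symm
    · have h0 : s (1/ε) = 0 := (hs_zero _).mpr le_rfl
      have := hs_mono h.le
      linarith
  -- s is Lipschitz with some constant Ls ≥ 0
  obtain ⟨C₀, hC₀⟩ := (isCompact_Icc (a := 1/ε) (b := t₀)).exists_bound_of_continuousOn
    (hs_smooth.continuous_deriv (by simp)).continuousOn
  set Ls : ℝ := max (max C₀ m₀) 0 with hLs
  have hLs0 : 0 ≤ Ls := le_max_right _ _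
  have hds : ∀ t, ‖deriv s t‖ ≤ Ls := by
    intro t
    rcases lt_or_ge t (1/ε) with h | h
    · have hev : s =ᶠ[nhds t] (fun _ => (0:ℝ)) := by
        filter_upwards [Iio_mem_nhds h] with u hu
        exact (hs_zero u).mpr (le_of_lt hu)
      rw [hev.deriv_eq]
      simp [hLs0]
    rcases le_or_gt t t₀ with h2 | h2
    · exact (hC₀ t ⟨h, h2⟩).trans (le_max_of_le_left (le_max_left _ _))
    · have hev : s =ᶠ[nhds t] (fun u => m₀ * u + q) := by
        filter_upwards [Ioi_mem_nhds h2] with u hu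
        exact hs_affine u hu.le
      rw [hev.deriv_eq]
      have hd : deriv (fun u : ℝ => m₀ * u + q) t = m₀ := by
        have := (((hasDerivAt_id t).const_mul m₀).add_const q).deriv
        simpa using this
      rw [hd, Real.norm_eq_abs, abs_of_pos hm₀]
      exact le_max_of_le_left (le_max_right _ _)
  have hsLip : ∀ a a', |s a - s a'| ≤ Ls * |a - a'| := by
    have hlip : LipschitzWith Ls.toNNReal s := by
      apply lipschitzWith_of_nnnorm_deriv_le (hs_smooth.differentiable (by simp))
      intro x
      rw [← NNReal.coe_le_coe, coe_nnnorm, Real.coe_toNNReal _ hLs0]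
      exact hds x
    intro a a'
    have := hlip.dist_le_mul a a'
    rwa [Real.dist_eq, Real.dist_eq, Real.coe_toNNReal _ hLs0] at this
  -- bound and Lipschitz estimates for the truncation
  set R : ℝ := max t₀ (1/m₀) with hR
  have hRt₀ : t₀ ≤ R := le_max_left _ _
  have hR0 : 0 < R := lt_of_lt_of_le ht₀pos hRt₀
  have hRm : 1 ≤ R * m₀ := by
    rw [← div_le_iff₀ hm₀]
    exact le_max_right _ _
  have hden : ∀ t : ℝ, (1:ℝ) ≤ 1 + s t := fun t => by linarith [hsnn t]
  have hdenpos : ∀ t : ℝ, (0:ℝ) < 1 + s t := fun t => lt_of_lt_of_le one_pos (hden t)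
  have hnorm : ∀ z : EuclideanSpace ℝ (Fin n × Fin m),
      ‖(1 + s ‖z‖)⁻¹ • z‖ = (1 + s ‖z‖)⁻¹ * ‖z‖ := by
    intro z
    rw [norm_smul, Real.norm_eq_abs, abs_of_pos (inv_pos.mpr (hdenpos ‖z‖))]
  have hbarR : ∀ z : EuclideanSpace ℝ (Fin n × Fin m), ‖(1 + s ‖z‖)⁻¹ • z‖ ≤ R := by
    intro z
    rw [hnorm, inv_mul_le_iff₀ (hdenpos ‖z‖)]
    set t := ‖z‖ with ht
    have ht0 : 0 ≤ t := norm_nonneg z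
    rcases le_or_gt t t₀ with h | h
    · nlinarith [hsnn t]
    · have h1 := hs_affine t h.le
      have h2 := hs_affine t₀ le_rfl
      have h3 := hsnn t₀
      nlinarith
  have hbarLip : ∀ z z' : EuclideanSpace ℝ (Fin n × Fin m),
      ‖(1 + s ‖z‖)⁻¹ • z - (1 + s ‖z'‖)⁻¹ • z'‖ ≤ (1 + R * Ls) * ‖z - z'‖ := by
    intro z z'
    set a := ‖z‖ with ha
    set a' := ‖z'‖ with ha'
    set c := (1 + s a)⁻¹ with hc
    set c' := (1 + s a')⁻¹ with hc'
    have hc0 : 0 < c := inv_pos.mpr (hdenpos a)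
    have hc'0 : 0 < c' := inv_pos.mpr (hdenpos a')
    have hc1 : c ≤ 1 := by
      rw [hc]
      exact inv_le_one_of_one_le₀ (hden a)
    have hsplit : c • z - c' • z' = c • (z - z') + (c - c') • z' := by
      rw [smul_sub, sub_smul]
      abel
    have hdiff : c - c' = (s a' - s a) * (c * c') := by
      rw [hc, hc', inv_sub_inv (hdenpos a).ne' (hdenpos a').ne', div_eq_mul_inv, mul_inv]
      ring
    have habs : |a - a'| ≤ ‖z - z'‖ := abs_norm_sub_norm_le z z'
    have hcz' : c' * a' ≤ R := by
      have := hbarR z'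
      rwa [hnorm] at this
    have h3 : ‖(c - c') • z'‖ ≤ R * Ls * ‖z - z'‖ := by
      rw [norm_smul, Real.norm_eq_abs, hdiff, abs_mul, abs_of_pos (mul_pos hc0 hc'0)]
      have e1 : |s a' - s a| ≤ Ls * ‖z - z'‖ := by
        have := hsLip a' a
        have h2 : |a' - a| ≤ ‖z - z'‖ := by rwa [abs_sub_comm] at habs
        nlinarith
      calc |s a' - s a| * (c * c') * a' = |s a' - s a| * c * (c' * a') := by ring
        _ ≤ (Ls * ‖z - z'‖) * 1 * R := by
            apply mul_le_mul _ hcz' (by positivity) (by positivity)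
            apply mul_le_mul e1 hc1 hc0.le (by positivity)
        _ = R * Ls * ‖z - z'‖ := by ring
    calc ‖c • z - c' • z'‖ = ‖c • (z - z') + (c - c') • z'‖ := by rw [hsplit]
      _ ≤ ‖c • (z - z')‖ + ‖(c - c') • z'‖ := norm_add_le _ _
      _ ≤ 1 * ‖z - z'‖ + R * Ls * ‖z - z'‖ := by
          apply add_le_add _ h3
          rw [norm_smul, Real.norm_eq_abs, abs_of_pos hc0]
          exact mul_le_mul_of_nonneg_right hc1 (norm_nonneg _)
      _ = (1 + R * Ls) * ‖z - z'‖ := by ring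
  -- O is bounded: diameter bound D
  obtain ⟨r, hr⟩ := hObd.subset_closedBall x₀
  set D : ℝ := max r 0 with hD
  have hD0 : 0 ≤ D := le_max_right _ _
  have hDbd : ∀ x ∈ O, ‖x - x₀‖ ≤ D := by
    intro x hx
    have := hr hx
    rw [Metric.mem_closedBall, dist_eq_norm] at this
    exact this.trans (le_max_left _ _)
  -- uniform bound on f at truncated arguments
  set Mf : ℝ := L' * (D * (1 + R) + R) + L₂ with hMfdef
  have hMf0 : 0 ≤ Mf := by positivity
  have hMf : ∀ b, ∀ x ∈ O, ∀ z : EuclideanSpace ℝ (Fin n × Fin m),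
      ‖f b x ((1 + s ‖z‖)⁻¹ • z)‖ ≤ Mf := by
    intro b x hx z
    set zb := (1 + s ‖z‖)⁻¹ • z with hzb
    have h1 := hf_lip b b x hx x₀ hx₀ zb 0
    have h2 : ‖f b x zb‖ ≤ ‖f b x zb - f b x₀ 0‖ + ‖f b x₀ 0‖ := by
      have := norm_add_le (f b x zb - f b x₀ 0) (f b x₀ 0)
      simpa using this
    have h3 := hf_bd b
    have h4 : ‖zb‖ ≤ R := hbarR z
    have h5 : ‖x - x₀‖ ≤ D := hDbd x hx
    have h6 : ‖b - b‖ = 0 := by simp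
    have h7 : ‖(0 : EuclideanSpace ℝ (Fin n × Fin m))‖ = 0 := norm_zero
    have h8 : ‖zb - 0‖ = ‖zb‖ := by simp
    rw [h6, h7, h8] at h1
    have hA : (0 + ‖x - x₀‖) * (1 + ‖zb‖ + 0) ≤ D * (1 + R) := by
      have h9 : (0:ℝ) ≤ ‖zb‖ := norm_nonneg _
      have h10 : (0:ℝ) ≤ ‖x - x₀‖ := norm_nonneg _
      nlinarith
    have hB : L' * ((0 + ‖x - x₀‖) * (1 + ‖zb‖ + 0) + ‖zb‖) ≤ L' * (D * (1 + R) + R) :=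
      mul_le_mul_of_nonneg_left (add_le_add hA h4) hL'.le
    rw [hMfdef]
    linarith
  -- φ is Lipschitz
  obtain ⟨Kφ, hKφlip⟩ := hφ.lipschitzWith_of_hasCompactSupport hφ_supp (by simp)
  have hKφ : ∀ x y, |φ x - φ y| ≤ (Kφ : ℝ) * ‖x - y‖ := by
    intro x y
    have := hKφlip.dist_le_mul x y
    rwa [Real.dist_eq, dist_eq_norm] at this
  have hKφ0 : (0:ℝ) ≤ (Kφ : ℝ) := Kφ.coe_nonneg
  -- the global Lipschitz constant
  set Lc : ℝ := (Kφ : ℝ) * Mf + 2 * L' * (1 + 2 * R) + L' * (1 + R * Ls) with hLc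
  have hLc0 : 0 ≤ Lc := by positivity
  have key : ∀ p p', ‖G p - G p'‖ ≤ Lc * ‖p - p'‖ := by
    rintro ⟨b, x, z⟩ ⟨b', x', z'⟩
    rw [hG, hG]
    set ρ := ‖((b, x, z) : EuclideanSpace ℝ (Fin d) × EuclideanSpace ℝ (Fin n) ×
      EuclideanSpace ℝ (Fin n × Fin m)) - (b', x', z')‖ with hρ
    have hρ0 : 0 ≤ ρ := norm_nonneg _
    have hdb : ‖b - b'‖ ≤ ρ := by
      have := norm_fst_le (((b, x, z) : EuclideanSpace ℝ (Fin d) × EuclideanSpace ℝ (Fin n) ×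
        EuclideanSpace ℝ (Fin n × Fin m)) - (b', x', z'))
      exact this
    have hsnd : ‖((x, z) : EuclideanSpace ℝ (Fin n) × EuclideanSpace ℝ (Fin n × Fin m))
        - (x', z')‖ ≤ ρ := by
      have := norm_snd_le (((b, x, z) : EuclideanSpace ℝ (Fin d) × EuclideanSpace ℝ (Fin n) ×
        EuclideanSpace ℝ (Fin n × Fin m)) - (b', x', z'))
      exact this
    have hdx : ‖x - x'‖ ≤ ρ := by
      have := norm_fst_le (((x, z) : EuclideanSpace ℝ (Fin n) ×
        EuclideanSpace ℝ (Fin n × Fin m)) - (x', z'))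
      simp only [Prod.fst_sub] at this
      exact this.trans hsnd
    have hdz : ‖z - z'‖ ≤ ρ := by
      have := norm_snd_le (((x, z) : EuclideanSpace ℝ (Fin n) ×
        EuclideanSpace ℝ (Fin n × Fin m)) - (x', z'))
      simp only [Prod.snd_sub] at this
      exact this.trans hsnd
    by_cases hx : x ∈ O <;> by_cases hx' : x' ∈ O <;> simp only [hx, hx', if_true, if_false,
      sub_zero, zero_sub, norm_neg, norm_zero]
    · -- both in O
      set zb := (1 + s ‖z‖)⁻¹ • z with hzb
      set zb' := (1 + s ‖z'‖)⁻¹ • z' with hzb'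
      set F := f b x zb with hF
      set F' := f b' x' zb' with hF'
      have hsplit : φ x • F - φ x' • F' = (φ x - φ x') • F + φ x' • (F - F') := by
        rw [smul_sub, sub_smul]
        abel
      have hzbR : ‖zb‖ ≤ R := hbarR z
      have hzb'R : ‖zb'‖ ≤ R := hbarR z'
      have hzbz : ‖zb - zb'‖ ≤ (1 + R * Ls) * ρ := by
        refine (hbarLip z z').trans ?_
        exact mul_le_mul_of_nonneg_left hdz (by positivity)
      have hFF' : ‖F - F'‖ ≤ L' * ((2 * ρ) * (1 + 2 * R) + (1 + R * Ls) * ρ) := by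
        refine (hf_lip b b' x hx x' hx' zb zb').trans ?_
        apply mul_le_mul_of_nonneg_left _ hL'.le
        apply add_le_add _ hzbz
        apply mul_le_mul (by linarith) (by linarith) (by positivity) (by positivity)
      have e1 : |φ x - φ x'| * ‖F‖ ≤ ((Kφ : ℝ) * ρ) * Mf := by
        apply mul_le_mul _ (hMf b x hx z) (norm_nonneg _) (by positivity)
        exact (hKφ x x').trans (mul_le_mul_of_nonneg_left hdx hKφ0)
      have e2 : |φ x'| * ‖F - F'‖ ≤ 1 * (L' * ((2 * ρ) * (1 + 2 * R) + (1 + R * Ls) * ρ)) := by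
        apply mul_le_mul _ hFF' (norm_nonneg _) zero_le_one
        rw [abs_of_nonneg (hφ_range x').1]
        exact (hφ_range x').2
      calc ‖φ x • F - φ x' • F'‖ = ‖(φ x - φ x') • F + φ x' • (F - F')‖ := by rw [hsplit]
        _ ≤ ‖(φ x - φ x') • F‖ + ‖φ x' • (F - F')‖ := norm_add_le _ _
        _ = |φ x - φ x'| * ‖F‖ + |φ x'| * ‖F - F'‖ := by
            rw [norm_smul, norm_smul, Real.norm_eq_abs, Real.norm_eq_abs]
        _ ≤ ((Kφ : ℝ) * ρ) * Mf + 1 * (L' * ((2 * ρ) * (1 + 2 * R) + (1 + R * Ls) * ρ)) :=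
            add_le_add e1 e2
        _ = Lc * ρ := by rw [hLc]; ring
    · -- x ∈ O, x' ∉ O
      have hφx' : φ x' = 0 := image_eq_zero_of_notMem_tsupport (fun h => hx' (hφ_suppO h))
      have e1 : |φ x| ≤ (Kφ : ℝ) * ρ := by
        have := hKφ x x'
        rw [hφx', sub_zero] at this
        exact this.trans (mul_le_mul_of_nonneg_left hdx hKφ0)
      calc ‖φ x • f b x ((1 + s ‖z‖)⁻¹ • z)‖ = |φ x| * ‖f b x ((1 + s ‖z‖)⁻¹ • z)‖ := by
            rw [norm_smul, Real.norm_eq_abs]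
        _ ≤ ((Kφ : ℝ) * ρ) * Mf :=
            mul_le_mul e1 (hMf b x hx z) (norm_nonneg _) (by positivity)
        _ ≤ Lc * ρ := by
            rw [hLc]
            have hA : 0 ≤ (2 * L' * (1 + 2 * R) + L' * (1 + R * Ls)) * ρ := by positivity
            nlinarith [hA]
    · -- x ∉ O, x' ∈ O
      have hφx : φ x = 0 := image_eq_zero_of_notMem_tsupport (fun h => hx (hφ_suppO h))
      have e1 : |φ x'| ≤ (Kφ : ℝ) * ρ := by
        have := hKφ x' x
        rw [hφx, sub_zero] at this
        have h2 : ‖x' - x‖ = ‖x - x'‖ := norm_sub_rev _ _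
        rw [h2] at this
        exact this.trans (mul_le_mul_of_nonneg_left hdx hKφ0)
      calc ‖φ x' • f b' x' ((1 + s ‖z'‖)⁻¹ • z')‖
          = |φ x'| * ‖f b' x' ((1 + s ‖z'‖)⁻¹ • z')‖ := by
            rw [norm_smul, Real.norm_eq_abs]
        _ ≤ ((Kφ : ℝ) * ρ) * Mf :=
            mul_le_mul e1 (hMf b' x' hx' z') (norm_nonneg _) (by positivity)
        _ ≤ Lc * ρ := by
            rw [hLc]
            have hA : 0 ≤ (2 * L' * (1 + 2 * R) + L' * (1 + R * Ls)) * ρ := by positivity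
            nlinarith [hA]
    · -- both outside
      positivity
  constructor
  · refine ⟨Mf, fun p => ?_⟩
    rw [hG]
    split_ifs with h
    · rw [norm_smul, Real.norm_eq_abs]
      calc |φ p.2.1| * ‖f p.1 p.2.1 ((1 + s ‖p.2.2‖)⁻¹ • p.2.2)‖
          ≤ 1 * Mf := by
            apply mul_le_mul _ (hMf p.1 p.2.1 h p.2.2) (norm_nonneg _) zero_le_one
            rw [abs_of_nonneg (hφ_range p.2.1).1]
            exact (hφ_range p.2.1).2
        _ = Mf := one_mul _
    · simpa using hMf0
  · refine ⟨Lc.toNNReal, LipschitzWith.of_dist_le_mul fun p p' => ?_⟩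
    rw [dist_eq_norm, dist_eq_norm, Real.coe_toNNReal _ hLc0]
    exact key p p'
end

section
/- Let O ⊂ ℝⁿ be open and bounded; let f : ℝ^d × O × ℝ^{n×m} → ℝⁿ satisfy ‖f(b,x,z) − f(b',x',z')‖ ≤ L'((‖b−b'‖ + ‖x−x'‖)(1 + ‖z‖ + ‖z'‖) + ‖z−z'‖) for all b,b' ∈ ℝ^d, x,x' ∈ O and n×m matrices z,z', and ‖f(b,x₀,0)‖ ≤ L₂ for some x₀ ∈ O and all b; let φ : ℝⁿ → [0,1] be C^∞ with compact support contained in O; let Γ̃_{jk} : ℝⁿ → ℝⁿ (1 ≤ j,k ≤ n) be C^∞ with compact support; let ε ∈ (0,1) and z̄ = z/(1 + s(‖z‖)) with s : ℝ → ℝ a C^∞ nondecreasing function, s(t) = 0 if and only if t ≤ 1/ε, affine with positive slope near ∞. Then the function γ : ℝ^d × ℝⁿ × ℝ^{n×m} → ℝⁿ defined by γ(b,x,z) = (1/2) Σ_{j,k} Γ̃_{jk}(x)·⟨[z̄]^k, [z̄]^j⟩ − φ(x)·f(b,x,z̄) (with f extended by 0 for x ∉ O, and [z̄]^i the i-th row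 of z̄) is bounded and Lipschitz. -/
private lemma coord_abs_le_norm' {ι : Type*} [Fintype ι] (w : EuclideanSpace ℝ ι) (p : ι) :
    |w p| ≤ ‖w‖ := by
  have h1 : ‖w p‖ ^ 2 ≤ ∑ i, ‖w i‖ ^ 2 :=
    Finset.single_le_sum (fun i _ => sq_nonneg (‖w i‖)) (Finset.mem_univ p)
  have h2 := Real.sqrt_le_sqrt h1
  rw [Real.sqrt_sq (norm_nonneg _)] at h2
  rw [EuclideanSpace.norm_eq]
  exact le_trans (le_of_eq (Real.norm_eq_abs (w p)).symm) h2

open scoped Classical in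
set_option maxHeartbeats 1000000 in
/-- Concluding assertion of Lemma 4.1: the generator
`γ(b,x,z) = (1/2) Σ_{j,k} Γ̃_{jk}(x) ⟨[z̄]^k, [z̄]^j⟩ − φ(x) f(b,x,z̄)` of the
auxiliary BSDE (with `z̄ = z/(1 + s ‖z‖)` the truncated control, `Γ̃_{jk}` the
cut-off Christoffel symbols, and `f` extended by `0` outside `O`) is bounded
and Lipschitz. -/
theorem stmt_7 (n m d : ℕ)
    (O : Set (EuclideanSpace ℝ (Fin n))) (hO : IsOpen O)
    (hObd : Bornology.IsBounded O)
    (f : EuclideanSpace ℝ (Fin d) → EuclideanSpace ℝ (Fin n) →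
      EuclideanSpace ℝ (Fin n × Fin m) → EuclideanSpace ℝ (Fin n))
    (L' : ℝ) (hL' : 0 < L')
    (hf_lip : ∀ b b', ∀ x ∈ O, ∀ x' ∈ O, ∀ z z',
      ‖f b x z - f b' x' z'‖ ≤
        L' * ((‖b - b'‖ + ‖x - x'‖) * (1 + ‖z‖ + ‖z'‖) + ‖z - z'‖))
    (x₀ : EuclideanSpace ℝ (Fin n)) (hx₀ : x₀ ∈ O)
    (L₂ : ℝ) (hL₂ : 0 < L₂) (hf_bd : ∀ b, ‖f b x₀ 0‖ ≤ L₂)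
    (φ : EuclideanSpace ℝ (Fin n) → ℝ) (hφ : ContDiff ℝ (⊤ : ℕ∞) φ)
    (hφ_supp : HasCompactSupport φ) (hφ_suppO : tsupport φ ⊆ O)
    (hφ_range : ∀ x, φ x ∈ Set.Icc (0:ℝ) 1)
    (Γ : Fin n → Fin n → EuclideanSpace ℝ (Fin n) → EuclideanSpace ℝ (Fin n))
    (hΓ_smooth : ∀ j k, ContDiff ℝ (⊤ : ℕ∞) (Γ j k))
    (hΓ_supp : ∀ j k, HasCompactSupport (Γ j k))
    (ε : ℝ) (hε : ε ∈ Set.Ioo (0:ℝ) 1)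
    (s : ℝ → ℝ) (hs_smooth : ContDiff ℝ (⊤ : ℕ∞) s) (hs_mono : Monotone s)
    (hs_zero : ∀ t, s t = 0 ↔ t ≤ 1 / ε)
    (t₀ : ℝ) (ht₀ : 1 / ε < t₀)
    (m₀ q : ℝ) (hm₀ : 0 < m₀) (hs_affine : ∀ t, t₀ ≤ t → s t = m₀ * t + q)
    (γ : EuclideanSpace ℝ (Fin d) × EuclideanSpace ℝ (Fin n) ×
      EuclideanSpace ℝ (Fin n × Fin m) → EuclideanSpace ℝ (Fin n))
    (hγ : ∀ p, γ p =
      (1/2 : ℝ) • (∑ j : Fin n, ∑ k : Fin n,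
        (∑ i : Fin m, ((1 + s ‖p.2.2‖)⁻¹ • p.2.2) (k, i) *
          ((1 + s ‖p.2.2‖)⁻¹ • p.2.2) (j, i)) • Γ j k p.2.1)
      - (if p.2.1 ∈ O
          then φ p.2.1 • f p.1 p.2.1 ((1 + s ‖p.2.2‖)⁻¹ • p.2.2) else 0)) :
    (∃ M : ℝ, ∀ p, ‖γ p‖ ≤ M) ∧ ∃ L : NNReal, LipschitzWith L γ := by
  obtain ⟨hε0, hε1⟩ := hε
  have h1ε : (1:ℝ) < 1 / ε := by rw [lt_div_iff₀ hε0]; linarith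
  have ht₀pos : (0:ℝ) < t₀ := by linarith
  -- `s` is nonnegative
  have hs0 : ∀ t, 0 ≤ s t := by
    intro t
    rcases le_or_gt t (1 / ε) with h | h
    · exact le_of_eq ((hs_zero t).mpr h).symm
    · have h0 : s (1 / ε) = 0 := (hs_zero _).mpr le_rfl
      have := hs_mono h.le
      linarith
  -- a Lipschitz constant for `s`
  have hsd : Differentiable ℝ s := hs_smooth.differentiable (by simp)
  obtain ⟨C₀, hC₀⟩ : ∃ C₀, ∀ t ∈ Set.Icc (1/ε) t₀, ‖deriv s t‖ ≤ C₀ :=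
    isCompact_Icc.exists_bound_of_continuousOn
      ((hs_smooth.continuous_deriv (by simp)).continuousOn)
  set Ks : ℝ := max (max C₀ m₀) 0 with hKs_def
  have hKs0 : 0 ≤ Ks := le_max_right _ _
  have hKsd : ∀ t, |deriv s t| ≤ Ks := by
    intro t
    rcases lt_or_ge t (1/ε) with h | h
    · have hder : deriv s t = 0 := by
        have hev : s =ᶠ[nhds t] (fun _ => (0:ℝ)) := by
          filter_upwards [Iio_mem_nhds h] with u hu
          exact (hs_zero u).mpr (le_of_lt hu)
        rw [hev.deriv_eq]
        exact deriv_const t 0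
      rw [hder]; simpa using hKs0
    rcases le_or_gt t t₀ with h' | h'
    · refine le_trans ?_ (le_trans (le_max_left C₀ m₀) (le_max_left _ _))
      simpa [Real.norm_eq_abs] using hC₀ t ⟨h, h'⟩
    · have hder : deriv s t = m₀ := by
        have hev : s =ᶠ[nhds t] (fun u => m₀ * u + q) := by
          filter_upwards [Ioi_mem_nhds h'] with u hu
          exact hs_affine u (le_of_lt hu)
        rw [hev.deriv_eq]
        have hda : HasDerivAt (fun u => m₀ * u + q) m₀ t := by
          simpa using ((hasDerivAt_id t).const_mul m₀).add_const q
        exact hda.deriv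
      rw [hder, abs_of_pos hm₀]
      exact le_trans (le_max_right C₀ m₀) (le_max_left _ _)
  have hs_lip : ∀ t u, |s t - s u| ≤ Ks * |t - u| := by
    have hlip : LipschitzWith Ks.toNNReal s := by
      apply lipschitzWith_of_nnnorm_deriv_le hsd
      intro t
      rw [← NNReal.coe_le_coe, coe_nnnorm, Real.coe_toNNReal _ hKs0, Real.norm_eq_abs]
      exact hKsd t
    intro t u
    have h := hlip.dist_le_mul t u
    rwa [Real.dist_eq, Real.dist_eq, Real.coe_toNNReal _ hKs0] at h
  -- facts about the truncation
  have ha0 : ∀ z : EuclideanSpace ℝ (Fin n × Fin m), 0 < 1 + s ‖z‖ := by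
    intro z; linarith [hs0 ‖z‖]
  have ha1 : ∀ z : EuclideanSpace ℝ (Fin n × Fin m), 1 ≤ 1 + s ‖z‖ := by
    intro z; linarith [hs0 ‖z‖]
  have hbar_norm : ∀ z : EuclideanSpace ℝ (Fin n × Fin m),
      ‖(1 + s ‖z‖)⁻¹ • z‖ = (1 + s ‖z‖)⁻¹ * ‖z‖ := by
    intro z
    rw [norm_smul, Real.norm_eq_abs, abs_of_pos (inv_pos.mpr (ha0 z))]
  set Cz : ℝ := t₀ + 1/m₀ with hCz_def
  have hCz : 0 < Cz := by positivity
  have hbar_bd : ∀ z : EuclideanSpace ℝ (Fin n × Fin m),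
      ‖(1 + s ‖z‖)⁻¹ • z‖ ≤ Cz := by
    intro z
    rw [hbar_norm]
    have ht0 : 0 ≤ ‖z‖ := norm_nonneg z
    rcases le_or_gt ‖z‖ t₀ with h | h
    · have hinv : (1 + s ‖z‖)⁻¹ ≤ 1 := inv_le_one_of_one_le₀ (ha1 z)
      have := mul_le_mul_of_nonneg_right hinv ht0
      rw [one_mul] at this
      have h1m : 0 < 1/m₀ := by positivity
      linarith
    · have hst : s ‖z‖ = m₀ * ‖z‖ + q := hs_affine _ h.le
      have hq : 0 ≤ m₀ * t₀ + q := by rw [← hs_affine t₀ le_rfl]; exact hs0 t₀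
      rw [hst, inv_mul_le_iff₀ (by nlinarith [mul_pos hm₀ (sub_pos.mpr h)]), hCz_def]
      have him : m₀ * (1/m₀) = 1 := mul_one_div_cancel hm₀.ne'
      have himt : m₀ * (1/m₀) * ‖z‖ = ‖z‖ := by rw [him]; ring
      have h1m : (0:ℝ) < 1/m₀ := one_div_pos.mpr hm₀
      have hB : 0 ≤ t₀ + q * (1/m₀) := by
        have h2 := mul_nonneg h1m.le hq
        have h3 : (1/m₀) * (m₀ * t₀ + q) = t₀ + q * (1/m₀) := by
          field_simp
        linarith
      nlinarith [mul_nonneg (mul_nonneg ht₀pos.le hm₀.le) (sub_nonneg.mpr h.le),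
        mul_nonneg ht₀pos.le hq, himt, hB, h1m]
  set Kbar : ℝ := 1 + Ks * Cz with hKbar_def
  have hKbar0 : 0 ≤ Kbar := by
    have := mul_nonneg hKs0 hCz.le; linarith
  have hbar_lip : ∀ z z' : EuclideanSpace ℝ (Fin n × Fin m),
      ‖(1 + s ‖z‖)⁻¹ • z - (1 + s ‖z'‖)⁻¹ • z'‖ ≤ Kbar * ‖z - z'‖ := by
    intro z z'
    have ha : 0 < 1 + s ‖z‖ := ha0 z
    have ha' : 0 < 1 + s ‖z'‖ := ha0 z'
    have e : (1 + s ‖z‖)⁻¹ • z - (1 + s ‖z'‖)⁻¹ • z'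
        = (1 + s ‖z‖)⁻¹ • (z - z') + ((1 + s ‖z‖)⁻¹ - (1 + s ‖z'‖)⁻¹) • z' := by
      module
    rw [e]
    have h1 : ‖(1 + s ‖z‖)⁻¹ • (z - z')‖ ≤ ‖z - z'‖ := by
      rw [norm_smul, Real.norm_eq_abs, abs_of_pos (inv_pos.mpr ha)]
      have := mul_le_mul_of_nonneg_right (inv_le_one_of_one_le₀ (ha1 z)) (norm_nonneg (z - z'))
      linarith
    have h2 : ‖((1 + s ‖z‖)⁻¹ - (1 + s ‖z'‖)⁻¹) • z'‖ ≤ Ks * ‖z - z'‖ * Cz := by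
      rw [norm_smul, Real.norm_eq_abs]
      have e2 : (1 + s ‖z‖)⁻¹ - (1 + s ‖z'‖)⁻¹
          = (1 + s ‖z‖)⁻¹ * (((1 + s ‖z'‖) - (1 + s ‖z‖)) * (1 + s ‖z'‖)⁻¹) := by
        field_simp
      have hA : |(1 + s ‖z'‖) - (1 + s ‖z‖)| ≤ Ks * ‖z - z'‖ := by
        have h3 : |(1 + s ‖z'‖) - (1 + s ‖z‖)| = |s ‖z'‖ - s ‖z‖| := by ring_nf
        rw [h3]
        refine le_trans (hs_lip _ _) ?_
        have h4 : |‖z'‖ - ‖z‖| ≤ ‖z' - z‖ := abs_norm_sub_norm_le z' z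
        have h5 : ‖z' - z‖ = ‖z - z'‖ := norm_sub_rev _ _
        have h6 := mul_le_mul_of_nonneg_left h4 hKs0
        rw [← h5]; exact h6
      have hB : (1 + s ‖z'‖)⁻¹ * ‖z'‖ ≤ Cz := by rw [← hbar_norm z']; exact hbar_bd z'
      have hC : (1 + s ‖z‖)⁻¹ ≤ 1 := inv_le_one_of_one_le₀ (ha1 z)
      calc |(1 + s ‖z‖)⁻¹ - (1 + s ‖z'‖)⁻¹| * ‖z'‖
          = (1 + s ‖z‖)⁻¹ * (|(1 + s ‖z'‖) - (1 + s ‖z‖)| * ((1 + s ‖z'‖)⁻¹ * ‖z'‖)) := by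
            rw [e2, abs_mul, abs_mul, abs_of_pos (inv_pos.mpr ha), abs_of_pos (inv_pos.mpr ha')]
            ring
        _ ≤ 1 * (|(1 + s ‖z'‖) - (1 + s ‖z‖)| * ((1 + s ‖z'‖)⁻¹ * ‖z'‖)) := by
            refine mul_le_mul_of_nonneg_right hC ?_
            exact mul_nonneg (abs_nonneg _) (mul_nonneg (inv_pos.mpr ha').le (norm_nonneg _))
        _ = |(1 + s ‖z'‖) - (1 + s ‖z‖)| * ((1 + s ‖z'‖)⁻¹ * ‖z'‖) := one_mul _
        _ ≤ (Ks * ‖z - z'‖) * Cz := by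
            refine mul_le_mul hA hB ?_ ?_
            · exact mul_nonneg (inv_pos.mpr ha').le (norm_nonneg _)
            · exact mul_nonneg hKs0 (norm_nonneg _)
    refine le_trans (norm_add_le _ _) ?_
    rw [hKbar_def]
    have := add_le_add h1 h2
    nlinarith [norm_nonneg (z - z')]
  -- Γ: bounds and Lipschitz constants
  have hΓlipE : ∀ j k, ∃ K : NNReal, LipschitzWith K (Γ j k) := fun j k =>
    ContDiff.lipschitzWith_of_hasCompactSupport (hΓ_supp j k) (hΓ_smooth j k) (by simp)
  choose KΓ hKΓ using hΓlipE
  have hΓbdE : ∀ j k : Fin n, ∃ M, ∀ x, ‖Γ j k x‖ ≤ M := fun j k =>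
    (hΓ_supp j k).exists_bound_of_continuous (hΓ_smooth j k).continuous
  choose MΓ hMΓ using hΓbdE
  have hMΓ0 : ∀ j k, 0 ≤ MΓ j k := fun j k => le_trans (norm_nonneg _) (hMΓ j k 0)
  have hΓlip : ∀ (j k) (x y : EuclideanSpace ℝ (Fin n)),
      ‖Γ j k x - Γ j k y‖ ≤ (KΓ j k : ℝ) * ‖x - y‖ := by
    intro j k x y
    have := (hKΓ j k).dist_le_mul x y
    rwa [dist_eq_norm, dist_eq_norm] at this
  -- φ : Lipschitz, vanishes off O
  obtain ⟨Kφ, hKφ⟩ := ContDiff.lipschitzWith_of_hasCompactSupport hφ_supp hφ (by simp)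
  have hφ_lip : ∀ x y, |φ x - φ y| ≤ (Kφ : ℝ) * ‖x - y‖ := by
    intro x y
    have := hKφ.dist_le_mul x y
    rwa [Real.dist_eq, dist_eq_norm] at this
  have hφ0 : ∀ x, x ∉ O → φ x = 0 := fun x hx =>
    image_eq_zero_of_notMem_tsupport (fun h => hx (hφ_suppO h))
  have hφb : ∀ x, |φ x| ≤ 1 := fun x => by
    rw [abs_of_nonneg (hφ_range x).1]; exact (hφ_range x).2
  -- O is bounded
  obtain ⟨D, hD⟩ := hObd.subset_closedBall x₀
  have hD' : ∀ x ∈ O, ‖x - x₀‖ ≤ D := by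
    intro x hx
    have := hD hx
    rwa [Metric.mem_closedBall, dist_eq_norm] at this
  have hD0 : 0 ≤ D := by simpa using hD' x₀ hx₀
  -- bound on f over O and the truncated ball
  set MF : ℝ := L₂ + L' * (D * (1 + Cz) + Cz) with hMF_def
  have hMF0 : 0 ≤ MF := by positivity
  have hfb : ∀ b x, x ∈ O → ∀ w : EuclideanSpace ℝ (Fin n × Fin m),
      ‖w‖ ≤ Cz → ‖f b x w‖ ≤ MF := by
    intro b x hx w hw
    have h := hf_lip b b x hx x₀ hx₀ w 0
    simp only [sub_self, norm_zero, sub_zero, add_zero, zero_add] at h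
    have htri : ‖f b x w‖ ≤ ‖f b x w - f b x₀ 0‖ + ‖f b x₀ 0‖ := by
      simpa using norm_add_le (f b x w - f b x₀ 0) (f b x₀ 0)
    have hin : ‖x - x₀‖ * (1 + ‖w‖) + ‖w‖ ≤ D * (1 + Cz) + Cz := by
      have h6 := mul_le_mul (hD' x hx) (by linarith : 1 + ‖w‖ ≤ 1 + Cz)
        (by positivity) hD0
      linarith
    have h7 := mul_le_mul_of_nonneg_left hin hL'.le
    rw [hMF_def]
    linarith [hf_bd b]
  -- quadratic coefficient bounds
  have hc_bd : ∀ (j k : Fin n) (w : EuclideanSpace ℝ (Fin n × Fin m)), ‖w‖ ≤ Cz →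
      |∑ i : Fin m, w (k, i) * w (j, i)| ≤ (m : ℝ) * Cz ^ 2 := by
    intro j k w hw
    calc |∑ i : Fin m, w (k, i) * w (j, i)| ≤ ∑ i : Fin m, |w (k, i) * w (j, i)| :=
          Finset.abs_sum_le_sum_abs _ _
      _ ≤ ∑ _i : Fin m, Cz * Cz := by
          refine Finset.sum_le_sum fun i _ => ?_
          rw [abs_mul]
          exact mul_le_mul ((coord_abs_le_norm' w _).trans hw)
            ((coord_abs_le_norm' w _).trans hw) (abs_nonneg _) hCz.le
      _ = (m : ℝ) * Cz ^ 2 := by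
          rw [Finset.sum_const, Finset.card_univ, Fintype.card_fin, nsmul_eq_mul]; ring
  have hc_lip : ∀ (j k : Fin n) (w w' : EuclideanSpace ℝ (Fin n × Fin m)),
      ‖w‖ ≤ Cz → ‖w'‖ ≤ Cz →
      |(∑ i : Fin m, w (k, i) * w (j, i)) - ∑ i : Fin m, w' (k, i) * w' (j, i)|
        ≤ (2 * m * Cz) * ‖w - w'‖ := by
    intro j k w w' hw hw'
    rw [← Finset.sum_sub_distrib]
    calc |∑ i : Fin m, (w (k, i) * w (j, i) - w' (k, i) * w' (j, i))|
        ≤ ∑ i : Fin m, |w (k, i) * w (j, i) - w' (k, i) * w' (j, i)| :=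
          Finset.abs_sum_le_sum_abs _ _
      _ ≤ ∑ _i : Fin m, (Cz * ‖w - w'‖ + ‖w - w'‖ * Cz) := by
          refine Finset.sum_le_sum fun i _ => ?_
          have e : w (k, i) * w (j, i) - w' (k, i) * w' (j, i)
              = w (k, i) * (w (j, i) - w' (j, i)) + (w (k, i) - w' (k, i)) * w' (j, i) := by
            ring
          rw [e]
          have c1 : |w (k, i)| ≤ Cz := (coord_abs_le_norm' w _).trans hw
          have c2 : |w (j, i) - w' (j, i)| ≤ ‖w - w'‖ := by
            have h8 : w (j, i) - w' (j, i) = (w - w') (j, i) := rfl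
            rw [h8]; exact coord_abs_le_norm' _ _
          have c3 : |w (k, i) - w' (k, i)| ≤ ‖w - w'‖ := by
            have h8 : w (k, i) - w' (k, i) = (w - w') (k, i) := rfl
            rw [h8]; exact coord_abs_le_norm' _ _
          have c4 : |w' (j, i)| ≤ Cz := (coord_abs_le_norm' w' _).trans hw'
          refine le_trans (abs_add_le _ _) (add_le_add ?_ ?_)
          · rw [abs_mul]; exact mul_le_mul c1 c2 (abs_nonneg _) hCz.le
          · rw [abs_mul]; exact mul_le_mul c3 c4 (abs_nonneg _) (norm_nonneg _)
      _ = (2 * m * Cz) * ‖w - w'‖ := by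
          rw [Finset.sum_const, Finset.card_univ, Fintype.card_fin, nsmul_eq_mul]; ring
  constructor
  · -- boundedness
    refine ⟨(1/2) * (∑ j : Fin n, ∑ k : Fin n, ((m : ℝ) * Cz ^ 2) * MΓ j k) + MF, ?_⟩
    intro p
    rw [hγ p]
    set w : EuclideanSpace ℝ (Fin n × Fin m) := (1 + s ‖p.2.2‖)⁻¹ • p.2.2 with hw_def
    have hwbd : ‖w‖ ≤ Cz := hbar_bd _
    have hSum : ‖∑ j : Fin n, ∑ k : Fin n,
        (∑ i : Fin m, w (k, i) * w (j, i)) • Γ j k p.2.1‖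
        ≤ ∑ j : Fin n, ∑ k : Fin n, ((m : ℝ) * Cz ^ 2) * MΓ j k := by
      refine (norm_sum_le _ _).trans (Finset.sum_le_sum fun j _ => ?_)
      refine (norm_sum_le _ _).trans (Finset.sum_le_sum fun k _ => ?_)
      rw [norm_smul, Real.norm_eq_abs]
      exact mul_le_mul (hc_bd j k w hwbd) (hMΓ j k _) (norm_nonneg _) (by positivity)
    have hIf : ‖(if p.2.1 ∈ O then φ p.2.1 • f p.1 p.2.1 w else 0)‖ ≤ MF := by
      split_ifs with h
      · rw [norm_smul, Real.norm_eq_abs]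
        calc |φ p.2.1| * ‖f p.1 p.2.1 w‖ ≤ 1 * MF :=
              mul_le_mul (hφb _) (hfb _ _ h w hwbd) (norm_nonneg _) one_pos.le
          _ = MF := one_mul _
      · simpa using hMF0
    refine le_trans (norm_sub_le _ _) ?_
    have hhalf : ‖(1/2 : ℝ) • (∑ j : Fin n, ∑ k : Fin n,
        (∑ i : Fin m, w (k, i) * w (j, i)) • Γ j k p.2.1)‖
        ≤ (1/2) * (∑ j : Fin n, ∑ k : Fin n, ((m : ℝ) * Cz ^ 2) * MΓ j k) := by
      rw [norm_smul, Real.norm_eq_abs, abs_of_pos (by norm_num : (0:ℝ) < 1/2)]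
      exact mul_le_mul_of_nonneg_left hSum (by norm_num)
    linarith
  · -- Lipschitz continuity
    set L₀ : ℝ := (1/2) * (∑ j : Fin n, ∑ k : Fin n,
        ((2 * m * Cz * Kbar) * MΓ j k + ((m : ℝ) * Cz ^ 2) * (KΓ j k : ℝ)))
      + ((Kφ : ℝ) * MF + L' * (2 * (1 + 2 * Cz) + Kbar)) with hL₀_def
    have hLf0 : 0 ≤ (Kφ : ℝ) * MF + L' * (2 * (1 + 2 * Cz) + Kbar) := by
      have h1 : (0:ℝ) ≤ (Kφ : ℝ) * MF := mul_nonneg (Kφ.coe_nonneg) hMF0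
      have h2 : (0:ℝ) ≤ L' * (2 * (1 + 2 * Cz) + Kbar) := by
        refine mul_nonneg hL'.le ?_; nlinarith
      linarith
    have hSum0 : 0 ≤ ∑ j : Fin n, ∑ k : Fin n,
        ((2 * m * Cz * Kbar) * MΓ j k + ((m : ℝ) * Cz ^ 2) * (KΓ j k : ℝ)) := by
      refine Finset.sum_nonneg fun j _ => Finset.sum_nonneg fun k _ => ?_
      have h1 : (0:ℝ) ≤ (2 * m * Cz * Kbar) * MΓ j k := by
        refine mul_nonneg ?_ (hMΓ0 j k)
        refine mul_nonneg (by positivity) hKbar0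
      have h2 : (0:ℝ) ≤ ((m : ℝ) * Cz ^ 2) * (KΓ j k : ℝ) :=
        mul_nonneg (by positivity) (KΓ j k).coe_nonneg
      linarith
    have hL₀0 : 0 ≤ L₀ := by
      rw [hL₀_def]
      exact add_nonneg (mul_nonneg (by norm_num) hSum0) hLf0
    refine ⟨L₀.toNNReal, LipschitzWith.of_dist_le_mul fun p p' => ?_⟩
    rw [dist_eq_norm, Real.coe_toNNReal _ hL₀0]
    have hd0 : 0 ≤ dist p p' := dist_nonneg
    have hdb : ‖p.1 - p'.1‖ ≤ dist p p' := by
      rw [Prod.dist_eq, ← dist_eq_norm]; exact le_max_left _ _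
    have hdx : ‖p.2.1 - p'.2.1‖ ≤ dist p p' := by
      rw [Prod.dist_eq]
      refine le_trans ?_ (le_max_right _ _)
      rw [Prod.dist_eq, ← dist_eq_norm]; exact le_max_left _ _
    have hdz : ‖p.2.2 - p'.2.2‖ ≤ dist p p' := by
      rw [Prod.dist_eq]
      refine le_trans ?_ (le_max_right _ _)
      rw [Prod.dist_eq, ← dist_eq_norm]; exact le_max_right _ _
    rw [hγ p, hγ p']
    set w : EuclideanSpace ℝ (Fin n × Fin m) := (1 + s ‖p.2.2‖)⁻¹ • p.2.2 with hw_def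
    set w' : EuclideanSpace ℝ (Fin n × Fin m) := (1 + s ‖p'.2.2‖)⁻¹ • p'.2.2 with hw'_def
    have hwbd : ‖w‖ ≤ Cz := hbar_bd _
    have hw'bd : ‖w'‖ ≤ Cz := hbar_bd _
    have hww : ‖w - w'‖ ≤ Kbar * dist p p' := by
      refine le_trans (hbar_lip _ _) ?_
      exact mul_le_mul_of_nonneg_left hdz hKbar0
    set S : EuclideanSpace ℝ (Fin n) := ∑ j : Fin n, ∑ k : Fin n,
        (∑ i : Fin m, w (k, i) * w (j, i)) • Γ j k p.2.1 with hS_def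
    set S' : EuclideanSpace ℝ (Fin n) := ∑ j : Fin n, ∑ k : Fin n,
        (∑ i : Fin m, w' (k, i) * w' (j, i)) • Γ j k p'.2.1 with hS'_def
    set T : EuclideanSpace ℝ (Fin n) :=
        if p.2.1 ∈ O then φ p.2.1 • f p.1 p.2.1 w else 0 with hT_def
    set T' : EuclideanSpace ℝ (Fin n) :=
        if p'.2.1 ∈ O then φ p'.2.1 • f p'.1 p'.2.1 w' else 0 with hT'_def
    have hsplit : (1/2 : ℝ) • S - T - ((1/2 : ℝ) • S' - T')
        = (1/2 : ℝ) • (S - S') + (T' - T) := by module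
    rw [hsplit]
    -- bound on the quadratic part
    have hSS : ‖S - S'‖ ≤ (∑ j : Fin n, ∑ k : Fin n,
        ((2 * m * Cz * Kbar) * MΓ j k + ((m : ℝ) * Cz ^ 2) * (KΓ j k : ℝ))) * dist p p' := by
      rw [hS_def, hS'_def, ← Finset.sum_sub_distrib]
      refine le_trans (norm_sum_le _ _) ?_
      rw [Finset.sum_mul]
      refine Finset.sum_le_sum fun j _ => ?_
      rw [← Finset.sum_sub_distrib]
      refine le_trans (norm_sum_le _ _) ?_
      rw [Finset.sum_mul]
      refine Finset.sum_le_sum fun k _ => ?_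
      have e : (∑ i : Fin m, w (k, i) * w (j, i)) • Γ j k p.2.1
          - (∑ i : Fin m, w' (k, i) * w' (j, i)) • Γ j k p'.2.1
          = ((∑ i : Fin m, w (k, i) * w (j, i)) - ∑ i : Fin m, w' (k, i) * w' (j, i))
              • Γ j k p.2.1
            + (∑ i : Fin m, w' (k, i) * w' (j, i)) • (Γ j k p.2.1 - Γ j k p'.2.1) := by
        module
      rw [e]
      have h1 : ‖((∑ i : Fin m, w (k, i) * w (j, i))
          - ∑ i : Fin m, w' (k, i) * w' (j, i)) • Γ j k p.2.1‖
          ≤ (2 * m * Cz * Kbar) * MΓ j k * dist p p' := by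
        rw [norm_smul, Real.norm_eq_abs]
        have hcc : |(∑ i : Fin m, w (k, i) * w (j, i))
            - ∑ i : Fin m, w' (k, i) * w' (j, i)| ≤ (2 * m * Cz) * (Kbar * dist p p') := by
          refine le_trans (hc_lip j k w w' hwbd hw'bd) ?_
          exact mul_le_mul_of_nonneg_left hww (by positivity)
        calc |(∑ i : Fin m, w (k, i) * w (j, i)) - ∑ i : Fin m, w' (k, i) * w' (j, i)|
              * ‖Γ j k p.2.1‖
            ≤ ((2 * m * Cz) * (Kbar * dist p p')) * MΓ j k := by
              refine mul_le_mul hcc (hMΓ j k _) (norm_nonneg _) ?_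
              exact mul_nonneg (by positivity) (mul_nonneg hKbar0 hd0)
          _ = (2 * m * Cz * Kbar) * MΓ j k * dist p p' := by ring
      have h2 : ‖(∑ i : Fin m, w' (k, i) * w' (j, i)) • (Γ j k p.2.1 - Γ j k p'.2.1)‖
          ≤ ((m : ℝ) * Cz ^ 2) * (KΓ j k : ℝ) * dist p p' := by
        rw [norm_smul, Real.norm_eq_abs]
        have hg : ‖Γ j k p.2.1 - Γ j k p'.2.1‖ ≤ (KΓ j k : ℝ) * dist p p' := by
          refine le_trans (hΓlip j k _ _) ?_
          exact mul_le_mul_of_nonneg_left hdx (KΓ j k).coe_nonneg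
        calc |∑ i : Fin m, w' (k, i) * w' (j, i)| * ‖Γ j k p.2.1 - Γ j k p'.2.1‖
            ≤ ((m : ℝ) * Cz ^ 2) * ((KΓ j k : ℝ) * dist p p') := by
              refine mul_le_mul (hc_bd j k w' hw'bd) hg (norm_nonneg _) (by positivity)
          _ = ((m : ℝ) * Cz ^ 2) * (KΓ j k : ℝ) * dist p p' := by ring
      refine le_trans (norm_add_le _ _) ?_
      calc ‖_‖ + ‖_‖ ≤ (2 * m * Cz * Kbar) * MΓ j k * dist p p'
            + ((m : ℝ) * Cz ^ 2) * (KΓ j k : ℝ) * dist p p' := add_le_add h1 h2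
        _ = ((2 * m * Cz * Kbar) * MΓ j k + ((m : ℝ) * Cz ^ 2) * (KΓ j k : ℝ)) * dist p p' := by
            ring
    -- bound on the drift part
    have hTT : ‖T - T'‖ ≤ ((Kφ : ℝ) * MF + L' * (2 * (1 + 2 * Cz) + Kbar)) * dist p p' := by
      have hL'term : 0 ≤ L' * (2 * (1 + 2 * Cz) + Kbar) * dist p p' := by
        refine mul_nonneg (mul_nonneg hL'.le (by nlinarith)) hd0
      have hKφterm : 0 ≤ (Kφ : ℝ) * MF * dist p p' :=
        mul_nonneg (mul_nonneg Kφ.coe_nonneg hMF0) hd0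
      rw [hT_def, hT'_def]
      split_ifs with hx hx' hx'
      · -- both in O
        have e : φ p.2.1 • f p.1 p.2.1 w - φ p'.2.1 • f p'.1 p'.2.1 w'
            = (φ p.2.1 - φ p'.2.1) • f p.1 p.2.1 w
              + φ p'.2.1 • (f p.1 p.2.1 w - f p'.1 p'.2.1 w') := by module
        rw [e]
        have h1 : ‖(φ p.2.1 - φ p'.2.1) • f p.1 p.2.1 w‖ ≤ (Kφ : ℝ) * MF * dist p p' := by
          rw [norm_smul, Real.norm_eq_abs]
          have hpp : |φ p.2.1 - φ p'.2.1| ≤ (Kφ : ℝ) * dist p p' := by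
            refine le_trans (hφ_lip _ _) ?_
            exact mul_le_mul_of_nonneg_left hdx Kφ.coe_nonneg
          calc |φ p.2.1 - φ p'.2.1| * ‖f p.1 p.2.1 w‖
              ≤ ((Kφ : ℝ) * dist p p') * MF := by
                refine mul_le_mul hpp (hfb _ _ hx w hwbd) (norm_nonneg _) ?_
                exact mul_nonneg Kφ.coe_nonneg hd0
            _ = (Kφ : ℝ) * MF * dist p p' := by ring
        have h2 : ‖φ p'.2.1 • (f p.1 p.2.1 w - f p'.1 p'.2.1 w')‖
            ≤ L' * (2 * (1 + 2 * Cz) + Kbar) * dist p p' := by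
          rw [norm_smul, Real.norm_eq_abs]
          have hΔf : ‖f p.1 p.2.1 w - f p'.1 p'.2.1 w'‖
              ≤ L' * (2 * (1 + 2 * Cz) + Kbar) * dist p p' := by
            refine le_trans (hf_lip p.1 p'.1 _ hx _ hx' w w') ?_
            have hin : (‖p.1 - p'.1‖ + ‖p.2.1 - p'.2.1‖) * (1 + ‖w‖ + ‖w'‖) + ‖w - w'‖
                ≤ (2 * dist p p') * (1 + 2 * Cz) + Kbar * dist p p' := by
              have hm1 : (‖p.1 - p'.1‖ + ‖p.2.1 - p'.2.1‖) * (1 + ‖w‖ + ‖w'‖)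
                  ≤ (2 * dist p p') * (1 + 2 * Cz) := by
                refine mul_le_mul (by linarith) (by linarith) (by positivity) (by linarith)
              linarith
            have := mul_le_mul_of_nonneg_left hin hL'.le
            calc L' * ((‖p.1 - p'.1‖ + ‖p.2.1 - p'.2.1‖) * (1 + ‖w‖ + ‖w'‖) + ‖w - w'‖)
                ≤ L' * ((2 * dist p p') * (1 + 2 * Cz) + Kbar * dist p p') := this
              _ = L' * (2 * (1 + 2 * Cz) + Kbar) * dist p p' := by ring
          calc |φ p'.2.1| * ‖f p.1 p.2.1 w - f p'.1 p'.2.1 w'‖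
              ≤ 1 * (L' * (2 * (1 + 2 * Cz) + Kbar) * dist p p') :=
                mul_le_mul (hφb _) hΔf (norm_nonneg _) one_pos.le
            _ = L' * (2 * (1 + 2 * Cz) + Kbar) * dist p p' := one_mul _
        refine le_trans (norm_add_le _ _) ?_
        calc ‖_‖ + ‖_‖ ≤ (Kφ : ℝ) * MF * dist p p'
              + L' * (2 * (1 + 2 * Cz) + Kbar) * dist p p' := add_le_add h1 h2
          _ = ((Kφ : ℝ) * MF + L' * (2 * (1 + 2 * Cz) + Kbar)) * dist p p' := by ring
      · -- x ∈ O, x' ∉ O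
        rw [sub_zero, norm_smul, Real.norm_eq_abs]
        have hφx : |φ p.2.1| ≤ (Kφ : ℝ) * dist p p' := by
          have h9 : φ p.2.1 = φ p.2.1 - φ p'.2.1 := by rw [hφ0 _ hx', sub_zero]
          rw [h9]
          refine le_trans (hφ_lip _ _) ?_
          exact mul_le_mul_of_nonneg_left hdx Kφ.coe_nonneg
        have := mul_le_mul hφx (hfb p.1 p.2.1 hx w hwbd) (norm_nonneg _)
          (mul_nonneg Kφ.coe_nonneg hd0)
        calc |φ p.2.1| * ‖f p.1 p.2.1 w‖ ≤ ((Kφ : ℝ) * dist p p') * MF := this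
          _ ≤ ((Kφ : ℝ) * MF + L' * (2 * (1 + 2 * Cz) + Kbar)) * dist p p' := by nlinarith
      · -- x ∉ O, x' ∈ O
        rw [zero_sub, norm_neg, norm_smul, Real.norm_eq_abs]
        have hφx : |φ p'.2.1| ≤ (Kφ : ℝ) * dist p p' := by
          have h9 : φ p'.2.1 = φ p'.2.1 - φ p.2.1 := by rw [hφ0 _ hx, sub_zero]
          rw [h9]
          refine le_trans (hφ_lip _ _) ?_
          rw [norm_sub_rev]
          exact mul_le_mul_of_nonneg_left hdx Kφ.coe_nonneg
        have := mul_le_mul hφx (hfb p'.1 p'.2.1 hx' w' hw'bd) (norm_nonneg _)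
          (mul_nonneg Kφ.coe_nonneg hd0)
        calc |φ p'.2.1| * ‖f p'.1 p'.2.1 w'‖ ≤ ((Kφ : ℝ) * dist p p') * MF := this
          _ ≤ ((Kφ : ℝ) * MF + L' * (2 * (1 + 2 * Cz) + Kbar)) * dist p p' := by nlinarith
      · -- both outside
        simp only [sub_zero, norm_zero]
        nlinarith
    refine le_trans (norm_add_le _ _) ?_
    have hhalf : ‖(1/2 : ℝ) • (S - S')‖ = (1/2) * ‖S - S'‖ := by
      rw [norm_smul, Real.norm_eq_abs, abs_of_pos (by norm_num : (0:ℝ) < 1/2)]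
    rw [hhalf, norm_sub_rev T' T]
    calc (1/2) * ‖S - S'‖ + ‖T - T'‖
        ≤ (1/2) * ((∑ j : Fin n, ∑ k : Fin n,
            ((2 * m * Cz * Kbar) * MΓ j k + ((m : ℝ) * Cz ^ 2) * (KΓ j k : ℝ))) * dist p p')
          + ((Kφ : ℝ) * MF + L' * (2 * (1 + 2 * Cz) + Kbar)) * dist p p' := by
          refine add_le_add (mul_le_mul_of_nonneg_left hSS (by norm_num)) hTT
      _ = L₀ * dist p p' := by rw [hL₀_def]; ring
end

section
/- Let T₁ ≤ T be reals, a ≥ 0 and κ ≥ 0 with κ·(T − T₁) ≤ 1. Let φ, ψ : [T₁, T] → ℝ be continuous nonnegative functions such that for every t ∈ [T₁, T], φ(t) + ψ(t) ≤ a + κ(T − t)·(∫_t^T φ(s) ds + ψ(t)). Then φ(t) ≤ a·e^{T−t} for every t ∈ [T₁, T]. -/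
open Set Real

/- Backward Gronwall: with `F t = ∫_t^T φ`, the hypothesis says `-F' ≤ a + K F`, so
`t ↦ exp (K t) * (a + K F t)` is monotone and is bounded by its value `exp (K T) * a` at `T`. -/
theorem le_mul_exp_of_le_add_mul_integral {T₁ T a K : ℝ} {φ : ℝ → ℝ} (hK : 0 ≤ K)
    (hφ : ContinuousOn φ (Icc T₁ T))
    (h : ∀ t ∈ Icc T₁ T, φ t ≤ a + K * ∫ s in t..T, φ s) :
    ∀ t ∈ Icc T₁ T, φ t ≤ a * exp (K * (T - t)) := by
  intro t ht
  have hT : T₁ ≤ T := ht.1.trans ht.2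
  set F : ℝ → ℝ := fun x => ∫ s in x..T, φ s with hF
  have hF_cont : ContinuousOn F (Icc T₁ T) := by
    have := intervalIntegral.continuousOn_primitive_interval_left (μ := MeasureTheory.volume)
      (hφ.mono (uIcc_of_le hT).subset).integrableOn_Icc
    rwa [uIcc_of_le hT] at this
  have hF_deriv : ∀ x ∈ Ioo T₁ T, HasDerivAt F (-φ x) x := fun x hx =>
    intervalIntegral.integral_hasDerivAt_left
      (hφ.mono (by rw [uIcc_of_le hx.2.le]; exact Icc_subset_Icc_left hx.1.le)).intervalIntegrable
      ((hφ.mono Ioo_subset_Icc_self).stronglyMeasurableAtFilter isOpen_Ioo x hx)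
      (hφ.continuousAt (Icc_mem_nhds hx.1 hx.2))
  set H : ℝ → ℝ := fun x => exp (K * x) * (a + K * F x) with hH
  have hH_mono : MonotoneOn H (Icc T₁ T) := by
    refine monotoneOn_of_hasDerivWithinAt_nonneg (convex_Icc T₁ T)
      (f' := fun x => K * exp (K * x) * (a + K * F x - φ x))
      ((continuous_exp.comp (continuous_const_mul K)).continuousOn.mul
        (continuousOn_const.add (continuousOn_const.mul hF_cont)))
      (fun x hx => ?_) (fun x hx => ?_)
    · rw [interior_Icc] at hx
      refine (((((hasDerivAt_id x).const_mul K).exp).mul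
        (((hF_deriv x hx).const_mul K).const_add a)).congr_deriv ?_).hasDerivWithinAt
      simp only [id]
      ring
    · rw [interior_Icc] at hx
      have := sub_nonneg.2 (h x (Ioo_subset_Icc_self hx))
      positivity
  have hHT : H t ≤ exp (K * T) * a := by
    simpa [hH, hF] using hH_mono ht (right_mem_Icc.2 hT) ht.2
  have hexp : exp (K * (T - t)) = exp (K * T) / exp (K * t) := by
    rw [mul_sub, exp_sub]
  calc φ t ≤ a + K * F t := h t ht
    _ ≤ a * exp (K * (T - t)) := by
      rw [hexp, mul_div_assoc', le_div_iff₀ (exp_pos _)]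
      linarith

theorem stmt_10_general (T₁ T a κ : ℝ) (hκ : 0 ≤ κ)
    (hκT : κ * (T - T₁) ≤ 1)
    (φ ψ : ℝ → ℝ)
    (hφc : ContinuousOn φ (Set.Icc T₁ T))
    (hφ0 : ∀ t ∈ Set.Icc T₁ T, 0 ≤ φ t) (hψ0 : ∀ t ∈ Set.Icc T₁ T, 0 ≤ ψ t)
    (hineq : ∀ t ∈ Set.Icc T₁ T,
      φ t + ψ t ≤ a + κ * (T - t) * ((∫ s in t..T, φ s) + ψ t)) :
    ∀ t ∈ Set.Icc T₁ T, φ t ≤ a * Real.exp (T - t) := by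
  have hle : ∀ t ∈ Icc T₁ T, φ t ≤ a + 1 * ∫ s in t..T, φ s := by
    intro t ht
    have hκt : κ * (T - t) ≤ 1 :=
      (mul_le_mul_of_nonneg_left (by linarith [ht.1]) hκ).trans hκT
    have hint : 0 ≤ ∫ s in t..T, φ s :=
      intervalIntegral.integral_nonneg ht.2 fun s hs => hφ0 s ⟨ht.1.trans hs.1, hs.2⟩
    linarith [hineq t ht, mul_le_of_le_one_left (add_nonneg hint (hψ0 t ht)) hκt]
  simpa using le_mul_exp_of_le_add_mul_integral zero_le_one hφc hle

/-- Deterministic backward Gronwall argument from Steps 2-3 of the proof of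
Proposition 4.5: if `φ(t) + ψ(t) ≤ a + κ(T−t)(∫_t^T φ + ψ(t))` on `[T₁, T]`
with `κ(T − T₁) ≤ 1`, then `φ(t) ≤ a e^{T−t}`. -/
theorem stmt_10 (T₁ T a κ : ℝ) (hT : T₁ ≤ T) (ha : 0 ≤ a) (hκ : 0 ≤ κ)
    (hκT : κ * (T - T₁) ≤ 1)
    (φ ψ : ℝ → ℝ)
    (hφc : ContinuousOn φ (Set.Icc T₁ T)) (hψc : ContinuousOn ψ (Set.Icc T₁ T))
    (hφ0 : ∀ t ∈ Set.Icc T₁ T, 0 ≤ φ t) (hψ0 : ∀ t ∈ Set.Icc T₁ T, 0 ≤ ψ t)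
    (hineq : ∀ t ∈ Set.Icc T₁ T,
      φ t + ψ t ≤ a + κ * (T - t) * ((∫ s in t..T, φ s) + ψ t)) :
    ∀ t ∈ Set.Icc T₁ T, φ t ≤ a * Real.exp (T - t) :=
  stmt_10_general T₁ T a κ hκ hκT φ ψ hφc hφ0 hψ0 hineq
end

section
/- Let O ⊆ ℝⁿ be open, χ : O → ℝ of class C², and c < c₁ reals such that K₁ := {x ∈ O : χ(x) ≤ c₁} is compact, convex and nonempty, the set {x ∈ O : χ(x) < c} is nonempty, and there is α > 0 with ⟨u, Hess χ(x) u⟩ ≥ α‖u‖² for all x ∈ K₁ and all u ∈ ℝⁿ. Let h : ℝ → ℝ be C¹, nonnegative and nondecreasing with h(s) = 0 if and only if s ≤ c. Let m ≥ 1, ζ > 0, C₀ > 0, and let g : ℝ^d × K₁ × ℝ^{n×m} → ℝⁿ satisfy: (a) ‖g(b,x,z)‖ ≤ C₀(1 + ‖z‖) for all (b,x,z); (b) ‖g(b,x,z) − g(b,x',z)‖ ≤ C₀‖x − x'‖(1 + ‖z‖) for all b, x, x', z; (c) ⟨∇χ(x), g(b,x,z)⟩ ≥ ζ for all b, z whenever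 χ(x) = c. Then there exists λ ≥ 0 such that for every b ∈ ℝ^d, every x ∈ K₁ and every n×m real matrix z with columns z₁,…,z_m (Frobenius norm ‖z‖): h'(χ(x)) · ((1/2) Σ_{i=1}^m ⟨z_i, Hess χ(x) z_i⟩ + ⟨∇χ(x), g(b,x,z)⟩) + λ·h(χ(x)) ≥ 0. -/
/-!
Near the level set `{χ = c}` the outward drift condition survives a small perturbation of `x`,
by continuity of `∇χ` and the Lipschitz bound on `g`; the error, linear in `‖z‖`, is absorbed by
the coercive term `(α/2)‖z‖²` coming from the Hessian. Compactness turns this into a band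
`c ≤ χ ≤ c + t₀` on which the bracket is nonnegative. Below `c` both `h` and `h'` vanish, and
above `c + t₀` the bracket is bounded below, `h'` is bounded on `[c, c₁]` and
`h ≥ h (c + t₀) > 0`, so a large `λ` absorbs the negative part.
-/

open Filter Topology Set

theorem IsCompact.exists_pos_forall_of_eventually_on_level {X : Type*} [TopologicalSpace X]
    [T2Space X] {K : Set X} (hK : IsCompact K) {χ : X → ℝ} (hχ : ContinuousOn χ K) {c : ℝ}
    {P : X → Prop} (hP : ∀ y ∈ K, χ y = c → ∀ᶠ x in 𝓝 y, P x) :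
    ∃ t > 0, ∀ x ∈ K, c ≤ χ x → χ x ≤ c + t → P x := by
  set S := (K ∩ χ ⁻¹' Ici c) \ interior {x | P x}
  have hS : IsCompact S :=
    (hK.of_isClosed_subset (hχ.preimage_isClosed_of_isClosed hK.isClosed isClosed_Ici)
      inter_subset_left).diff isOpen_interior
  have hPS : ∀ x ∈ K, c ≤ χ x → x ∉ S → P x := fun x hx hcx hxS =>
    interior_subset (by_contra fun h => hxS ⟨⟨hx, hcx⟩, h⟩)
  rcases S.eq_empty_or_nonempty with hS₀ | hSne
  · exact ⟨1, one_pos, fun x hx hcx _ => hPS x hx hcx (hS₀ ▸ notMem_empty x)⟩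
  obtain ⟨x₀, ⟨⟨hx₀K, hx₀c⟩, hx₀P⟩, hmin⟩ := hS.exists_isMinOn hSne (hχ.mono fun x hx => hx.1.1)
  have hcx₀ : c < χ x₀ := lt_of_le_of_ne hx₀c fun h =>
    hx₀P (mem_interior_iff_mem_nhds.2 (hP x₀ hx₀K h.symm))
  refine ⟨(χ x₀ - c) / 2, by linarith, fun x hx hcx hxt => hPS x hx hcx fun hxS => ?_⟩
  linarith [isMinOn_iff.1 hmin x hxS]

theorem EuclideanSpace.norm_sq_eq_sum_norm_sq_col {𝕜 ι κ : Type*} [RCLike 𝕜] [Fintype ι]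
    [Fintype κ] (z : EuclideanSpace 𝕜 (ι × κ)) :
    ‖z‖ ^ 2 = ∑ j, ‖(WithLp.equiv 2 (ι → 𝕜)).symm (fun i => z (i, j))‖ ^ 2 := by
  simp only [EuclideanSpace.norm_sq_eq, Fintype.sum_prod_type]
  rw [Finset.sum_comm]
  rfl

theorem EuclideanSpace.mul_norm_sq_le_sum_col {ι κ : Type*} [Fintype ι] [Fintype κ] {α : ℝ}
    {q : EuclideanSpace ℝ ι → ℝ} (hq : ∀ u, α * ‖u‖ ^ 2 ≤ q u) (z : EuclideanSpace ℝ (ι × κ)) :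
    α * ‖z‖ ^ 2 ≤ ∑ j, q ((WithLp.equiv 2 (ι → ℝ)).symm (fun i => z (i, j))) := by
  rw [EuclideanSpace.norm_sq_eq_sum_norm_sq_col, Finset.mul_sum]
  exact Finset.sum_le_sum fun j _ => hq _

theorem ContinuousLinearMap.norm_apply_sub_apply_le {E F : Type*} [SeminormedAddCommGroup E]
    [NormedSpace ℝ E] [SeminormedAddCommGroup F] [NormedSpace ℝ F] (L L' : E →L[ℝ] F) (v v' : E) :
    ‖L v - L' v'‖ ≤ ‖L‖ * ‖v - v'‖ + ‖L - L'‖ * ‖v'‖ := by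
  calc ‖L v - L' v'‖ = ‖L (v - v') + (L - L') v'‖ := by
        rw [map_sub, _root_.sub_apply]; abel_nf
    _ ≤ ‖L‖ * ‖v - v'‖ + ‖L - L'‖ * ‖v'‖ :=
        (norm_add_le _ _).trans (add_le_add (L.le_opNorm _) ((L - L').le_opNorm _))

section Drift

variable {E β Z : Type*} [NormedAddCommGroup E] [NormedSpace ℝ E] [SeminormedAddCommGroup Z]
  {K : Set E} {L : E → E →L[ℝ] ℝ} {g : β → E → Z → E} {α ζ C₀ : ℝ}

theorem exists_forall_neg_le_drift (hα : 0 < α)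
    (hg_bd : ∀ b, ∀ x ∈ K, ∀ z, ‖g b x z‖ ≤ C₀ * (1 + ‖z‖)) {M : ℝ}
    (hM : ∀ x ∈ K, ‖L x‖ ≤ M) :
    ∃ B, ∀ b, ∀ x ∈ K, ∀ z, -B ≤ α / 2 * ‖z‖ ^ 2 + L x (g b x z) := by
  refine ⟨M * C₀ + (M * C₀) ^ 2 / (2 * α), fun b x hx z => ?_⟩
  have hLg : |L x (g b x z)| ≤ M * (C₀ * (1 + ‖z‖)) :=
    (L x).le_of_opNorm_le_of_le (hM x hx) (hg_bd b x hx z)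
  have hsq : M * C₀ * ‖z‖ - α / 2 * ‖z‖ ^ 2 ≤ (M * C₀) ^ 2 / (2 * α) := by
    rw [le_div_iff₀ (by positivity)]
    nlinarith [sq_nonneg (α * ‖z‖ - M * C₀)]
  linarith [neg_abs_le (L x (g b x z))]

theorem eventually_drift_nonneg (hα : 0 < α) (hζ : 0 < ζ) (hC₀ : 0 < C₀) {y : E}
    (hL : ContinuousAt L y) (hy : y ∈ K)
    (hg_bd : ∀ b, ∀ x ∈ K, ∀ z, ‖g b x z‖ ≤ C₀ * (1 + ‖z‖))
    (hg_lip : ∀ b, ∀ x ∈ K, ∀ x' ∈ K, ∀ z, ‖g b x z - g b x' z‖ ≤ C₀ * ‖x - x'‖ * (1 + ‖z‖))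
    (hg_out : ∀ b z, ζ ≤ L y (g b y z)) :
    ∀ᶠ x in 𝓝 y, x ∈ K → ∀ b z, 0 ≤ α / 2 * ‖z‖ ^ 2 + L x (g b x z) := by
  set ε := min (ζ / 2) (α / 2)
  have hε : 0 < ε := lt_min (by linarith) (by linarith)
  set δ := ε / (C₀ * (‖L y‖ + 1))
  have hδ : 0 < δ := by positivity
  filter_upwards [hL.eventually (Metric.ball_mem_nhds _ hδ), Metric.ball_mem_nhds y hδ]
    with x hLx hxy hxK b z
  rw [mem_ball_iff_norm] at hxy
  rw [dist_eq_norm'] at hLx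
  have hlip := hg_lip b y hy x hxK z
  rw [norm_sub_rev y x] at hlip
  have hperturb : L y (g b y z) - L x (g b x z) ≤ ε * (1 + ‖z‖) := by
    have hnorms : ‖L y‖ * ‖g b y z - g b x z‖ + ‖L y - L x‖ * ‖g b x z‖
        ≤ ‖L y‖ * (C₀ * δ * (1 + ‖z‖)) + δ * (C₀ * (1 + ‖z‖)) := by
      gcongr
      · exact hlip.trans (by gcongr)
      · exact hg_bd b x hxK z
    have hεδ : ε = δ * (C₀ * (‖L y‖ + 1)) := (div_mul_cancel₀ ε (by positivity)).symm
    calc _ ≤ ‖L y (g b y z) - L x (g b x z)‖ := Real.le_norm_self _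
      _ ≤ _ := (ContinuousLinearMap.norm_apply_sub_apply_le _ _ _ _).trans hnorms
      _ = ε * (1 + ‖z‖) := by rw [hεδ]; ring
  have hε₁ : ε ≤ ζ / 2 := min_le_left _ _
  have hε₂ : ε ≤ α / 2 := min_le_right _ _
  have hquad : ε * (1 + ‖z‖) ≤ α / 2 * ‖z‖ ^ 2 + ζ := by
    rcases le_total ‖z‖ 1 with hz | hz
    · nlinarith [norm_nonneg z]
    · have hzsq : ‖z‖ ≤ ‖z‖ ^ 2 := by nlinarith
      nlinarith [mul_le_mul_of_nonneg_right hε₂ (norm_nonneg z),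
        mul_le_mul_of_nonneg_left hzsq (half_pos hα).le]
  linarith [hg_out b z]

theorem IsCompact.exists_pos_forall_drift_nonneg_near_level (hK : IsCompact K) {χ : E → ℝ}
    (hχ : ContinuousOn χ K) (hL : ∀ y ∈ K, ContinuousAt L y) (hα : 0 < α) (hζ : 0 < ζ)
    (hC₀ : 0 < C₀) (hg_bd : ∀ b, ∀ x ∈ K, ∀ z, ‖g b x z‖ ≤ C₀ * (1 + ‖z‖))
    (hg_lip : ∀ b, ∀ x ∈ K, ∀ x' ∈ K, ∀ z, ‖g b x z - g b x' z‖ ≤ C₀ * ‖x - x'‖ * (1 + ‖z‖))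
    {c : ℝ} (hg_out : ∀ b z, ∀ x ∈ K, χ x = c → ζ ≤ L x (g b x z)) :
    ∃ t > 0, ∀ x ∈ K, c ≤ χ x → χ x ≤ c + t → ∀ b z, 0 ≤ α / 2 * ‖z‖ ^ 2 + L x (g b x z) := by
  obtain ⟨t, ht, hband⟩ := hK.exists_pos_forall_of_eventually_on_level hχ fun y hy hyc =>
    eventually_drift_nonneg hα hζ hC₀ (hL y hy) hy hg_bd hg_lip fun b z => hg_out b z y hy hyc
  exact ⟨t, ht, fun x hx hcx hxt => hband x hx hcx hxt hx⟩

end Drift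

theorem exists_forall_nonneg_deriv_mul_add_mul {h : ℝ → ℝ} (hh : ContDiff ℝ 1 h)
    (hh0 : ∀ r, 0 ≤ h r) (hhmono : Monotone h) {c : ℝ} (hhzero : ∀ r, h r = 0 ↔ r ≤ c)
    (c₁ : ℝ) {t₀ : ℝ} (ht₀ : 0 < t₀) (B : ℝ) :
    ∃ lam : ℝ, 0 ≤ lam ∧ ∀ r q, r ≤ c₁ → -B ≤ q → (c ≤ r → r ≤ c + t₀ → 0 ≤ q) →
      0 ≤ deriv h r * q + lam * h r := by
  obtain ⟨D, hD⟩ := (isCompact_Icc (a := c) (b := c₁)).exists_bound_of_continuousOn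
    (hh.continuous_deriv le_rfl).continuousOn
  have hpos : 0 < h (c + t₀) := (hh0 _).lt_of_ne fun h0 => by linarith [(hhzero _).1 h0.symm]
  refine ⟨|D| * |B| / h (c + t₀), by positivity, fun r q hr hqB hq => ?_⟩
  have hder : 0 ≤ deriv h r := hhmono.deriv_nonneg
  rcases le_or_gt r c with hrc | hrc
  · have hmin : IsLocalMin h r := Eventually.of_forall fun s => (hhzero r).2 hrc ▸ hh0 s
    rw [hmin.deriv_eq_zero, (hhzero r).2 hrc]
    simp
  rcases le_or_gt r (c + t₀) with hnear | hfar
  · exact add_nonneg (mul_nonneg hder (hq hrc.le hnear)) (mul_nonneg (by positivity) (hh0 r))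
  have hDr : deriv h r ≤ |D| :=
    (Real.le_norm_self _).trans ((hD r ⟨hrc.le, hr⟩).trans (le_abs_self D))
  have hdrift : -(|D| * |B|) ≤ deriv h r * q := by
    linarith [mul_le_mul_of_nonneg_right hDr (abs_nonneg B), mul_le_mul_of_nonneg_left hqB hder,
      mul_le_mul_of_nonneg_left (neg_le_neg (le_abs_self B)) hder]
  have hcutoff : |D| * |B| ≤ |D| * |B| / h (c + t₀) * h r := by
    rw [div_mul_eq_mul_div, le_div_iff₀ hpos]
    exact mul_le_mul_of_nonneg_left (hhmono hfar.le) (by positivity)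
  linarith

theorem stmt_12_general (n d m : ℕ)
    (O : Set (EuclideanSpace ℝ (Fin n))) (hO : IsOpen O)
    (χ : EuclideanSpace ℝ (Fin n) → ℝ) (hχ : ContDiffOn ℝ 2 χ O)
    (c c₁ : ℝ)
    (K₁ : Set (EuclideanSpace ℝ (Fin n))) (hK₁ : K₁ = {x ∈ O | χ x ≤ c₁})
    (hK₁c : IsCompact K₁)
    (α : ℝ) (hα : 0 < α)
    (hHess : ∀ x ∈ K₁, ∀ u : EuclideanSpace ℝ (Fin n),
      α * ‖u‖ ^ 2 ≤ fderiv ℝ (fderiv ℝ χ) x u u)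
    (h : ℝ → ℝ) (hh : ContDiff ℝ 1 h) (hh0 : ∀ r, 0 ≤ h r) (hhmono : Monotone h)
    (hhzero : ∀ r, h r = 0 ↔ r ≤ c)
    (ζ C₀ : ℝ) (hζ : 0 < ζ) (hC₀ : 0 < C₀)
    (g : EuclideanSpace ℝ (Fin d) → EuclideanSpace ℝ (Fin n) →
      EuclideanSpace ℝ (Fin n × Fin m) → EuclideanSpace ℝ (Fin n))
    (hg_bd : ∀ b, ∀ x ∈ K₁, ∀ z, ‖g b x z‖ ≤ C₀ * (1 + ‖z‖))
    (hg_lip : ∀ b, ∀ x ∈ K₁, ∀ x' ∈ K₁, ∀ z,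
      ‖g b x z - g b x' z‖ ≤ C₀ * ‖x - x'‖ * (1 + ‖z‖))
    (hg_out : ∀ b z, ∀ x ∈ K₁, χ x = c → ζ ≤ fderiv ℝ χ x (g b x z)) :
    ∃ lam : ℝ, 0 ≤ lam ∧ ∀ b, ∀ x ∈ K₁, ∀ z : EuclideanSpace ℝ (Fin n × Fin m),
      0 ≤ deriv h (χ x) *
            ((1/2) * ∑ i : Fin m,
                fderiv ℝ (fderiv ℝ χ) x
                  ((WithLp.equiv 2 (Fin n → ℝ)).symm (fun k => z (k, i)))
                  ((WithLp.equiv 2 (Fin n → ℝ)).symm (fun k => z (k, i)))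
              + fderiv ℝ χ x (g b x z))
          + lam * h (χ x) := by
  have hKO : K₁ ⊆ O := hK₁ ▸ fun x hx => hx.1
  have hdχ : ContinuousOn (fderiv ℝ χ) O := hχ.continuousOn_fderiv_of_isOpen hO (by norm_num)
  obtain ⟨t₀, ht₀, hband⟩ := hK₁c.exists_pos_forall_drift_nonneg_near_level
    (hχ.continuousOn.mono hKO) (fun y hy => hdχ.continuousAt (hO.mem_nhds (hKO hy)))
    hα hζ hC₀ hg_bd hg_lip hg_out
  obtain ⟨M, hM⟩ := hK₁c.exists_bound_of_continuousOn (hdχ.mono hKO)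
  obtain ⟨B, hB⟩ := exists_forall_neg_le_drift hα hg_bd hM
  obtain ⟨lam, hlam, hnonneg⟩ :=
    exists_forall_nonneg_deriv_mul_add_mul hh hh0 hhmono hhzero c₁ ht₀ B
  refine ⟨lam, hlam, fun b x hx z => ?_⟩
  have hHz := EuclideanSpace.mul_norm_sq_le_sum_col (hHess x hx) z
  exact hnonneg _ _ (hK₁ ▸ hx).2 (by linarith [hB b x hx z])
    fun hcx hxt => by linarith [hband x hx hcx hxt b z]

/-- Analytic core of the submartingale construction in Proposition 4.6 and
Theorem 5.1: for `h` vanishing exactly on `(-∞, c]`, a strictly convex `χ`, and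
a drift `g` with linear growth, Lipschitz dependence on `x`, and pointing
strictly outward on the level set `{χ = c}`, there is `λ ≥ 0` making the
pointwise expression
`h'(χ(x)) ((1/2) Σᵢ ⟨zᵢ, Hess χ(x) zᵢ⟩ + ⟨∇χ(x), g(b,x,z)⟩) + λ h(χ(x))`
nonnegative on `K₁ = {x ∈ O : χ(x) ≤ c₁}`. -/
theorem stmt_12 (n d m : ℕ) (hm : 1 ≤ m)
    (O : Set (EuclideanSpace ℝ (Fin n))) (hO : IsOpen O)
    (χ : EuclideanSpace ℝ (Fin n) → ℝ) (hχ : ContDiffOn ℝ 2 χ O)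
    (c c₁ : ℝ) (hcc : c < c₁)
    (K₁ : Set (EuclideanSpace ℝ (Fin n))) (hK₁ : K₁ = {x ∈ O | χ x ≤ c₁})
    (hK₁c : IsCompact K₁) (hK₁conv : Convex ℝ K₁) (hK₁ne : K₁.Nonempty)
    (hsubc : {x ∈ O | χ x < c}.Nonempty)
    (α : ℝ) (hα : 0 < α)
    (hHess : ∀ x ∈ K₁, ∀ u : EuclideanSpace ℝ (Fin n),
      α * ‖u‖ ^ 2 ≤ fderiv ℝ (fderiv ℝ χ) x u u)
    (h : ℝ → ℝ) (hh : ContDiff ℝ 1 h) (hh0 : ∀ r, 0 ≤ h r) (hhmono : Monotone h)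
    (hhzero : ∀ r, h r = 0 ↔ r ≤ c)
    (ζ C₀ : ℝ) (hζ : 0 < ζ) (hC₀ : 0 < C₀)
    (g : EuclideanSpace ℝ (Fin d) → EuclideanSpace ℝ (Fin n) →
      EuclideanSpace ℝ (Fin n × Fin m) → EuclideanSpace ℝ (Fin n))
    (hg_bd : ∀ b, ∀ x ∈ K₁, ∀ z, ‖g b x z‖ ≤ C₀ * (1 + ‖z‖))
    (hg_lip : ∀ b, ∀ x ∈ K₁, ∀ x' ∈ K₁, ∀ z,
      ‖g b x z - g b x' z‖ ≤ C₀ * ‖x - x'‖ * (1 + ‖z‖))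
    (hg_out : ∀ b z, ∀ x ∈ K₁, χ x = c → ζ ≤ fderiv ℝ χ x (g b x z)) :
    ∃ lam : ℝ, 0 ≤ lam ∧ ∀ b, ∀ x ∈ K₁, ∀ z : EuclideanSpace ℝ (Fin n × Fin m),
      0 ≤ deriv h (χ x) *
            ((1/2) * ∑ i : Fin m,
                fderiv ℝ (fderiv ℝ χ) x
                  ((WithLp.equiv 2 (Fin n → ℝ)).symm (fun k => z (k, i)))
                  ((WithLp.equiv 2 (Fin n → ℝ)).symm (fun k => z (k, i)))
              + fderiv ℝ χ x (g b x z))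
          + lam * h (χ x) :=
  stmt_12_general n d m O hO χ hχ c c₁ K₁ hK₁ hK₁c α hα hHess h hh hh0 hhmono hhzero ζ C₀ hζ hC₀ g
    hg_bd hg_lip hg_out
end

section
/- Let χ : ℝⁿ → ℝ be C² with χ(0) = 0, ∇χ(0) = 0, and ⟨u, Hess χ(y) u⟩ ≥ λ‖u‖² for all y, u ∈ ℝⁿ, where λ > 0. Let c > 0 and c₂ > 0, and define F(y) = √c₂ · y / √(c₂‖y‖² + c − χ(y)) for y in the sublevel set S := {y ∈ ℝⁿ : χ(y) ≤ c}. Then S is compact, the quantity c₂‖y‖² + c − χ(y) is strictly positive on S, and F restricted to S is a homeomorphism from S onto the closed Euclidean unit ball of ℝⁿ which maps the level set {χ = c} onto the unit sphere and satisfies F(0) = 0. -/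
/-!
Along a ray `t ↦ t • y` the Hessian bound makes `t ↦ χ (t • y)` strictly increasing on `t ≥ 0`
with `χ y ≥ lam / 2 * ‖y‖ ^ 2`, so each ray leaves the sublevel set exactly once, through the
level set. The chart `F` moves points only along their own ray, with
`‖F y‖⁻² = 1 + (c - χ y) / (c₂ * ‖y‖ ^ 2)`; this is `1` exactly on the level set and strictly
decreasing along each ray inside the sublevel set. Hence `F` maps every ray segment of the
sublevel set bijectively onto the corresponding radius of the unit ball, and a continuous
bijection from a compact space onto a Hausdorff one is a homeomorphism.
-/

open Real Set Metric

section Ray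

variable {E : Type*} [NormedAddCommGroup E] [NormedSpace ℝ E]

def HessianLowerBound (χ : E → ℝ) (lam : ℝ) : Prop :=
  ∀ y u : E, lam * ‖u‖ ^ 2 ≤ fderiv ℝ (fderiv ℝ χ) y u u

theorem hasDerivAt_comp_smul {F : Type*} [NormedAddCommGroup F] [NormedSpace ℝ F] {f : E → F}
    (hf : Differentiable ℝ f) (y : E) (t : ℝ) :
    HasDerivAt (fun s : ℝ => f (s • y)) (fderiv ℝ f (t • y) y) t := by
  simpa [Function.comp_def] using
    (hf (t • y)).hasFDerivAt.comp_hasDerivAt t ((hasDerivAt_id t).smul_const y)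

variable {χ : E → ℝ} {lam : ℝ}

theorem hasDerivAt_fderiv_comp_smul_apply (hχ : ContDiff ℝ 2 χ) (y : E) (t : ℝ) :
    HasDerivAt (fun s : ℝ => fderiv ℝ χ (s • y) y) (fderiv ℝ (fderiv ℝ χ) (t • y) y y) t := by
  have hd : Differentiable ℝ (fderiv ℝ χ) :=
    (hχ.fderiv_right (m := 1) le_rfl).differentiable one_ne_zero
  simpa using (hasDerivAt_comp_smul hd y t).clm_apply (hasDerivAt_const t y)

theorem mul_le_fderiv_smul_apply (hχ : ContDiff ℝ 2 χ) (hdχ0 : fderiv ℝ χ 0 = 0)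
    (hHess : HessianLowerBound χ lam) (y : E) {t : ℝ} (ht : 0 ≤ t) :
    lam * ‖y‖ ^ 2 * t ≤ fderiv ℝ χ (t • y) y := by
  have hderiv := hasDerivAt_fderiv_comp_smul_apply hχ y
  have := mul_sub_le_image_sub_of_le_deriv (fun s => (hderiv s).differentiableAt)
    (fun s => (hderiv s).deriv ▸ hHess (s • y) y) ht
  simpa [hdχ0] using this

theorem strictMonoOn_comp_smul (hχ : ContDiff ℝ 2 χ) (hdχ0 : fderiv ℝ χ 0 = 0)
    (hlam : 0 < lam) (hHess : HessianLowerBound χ lam) {y : E} (hy : y ≠ 0) :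
    StrictMonoOn (fun t : ℝ => χ (t • y)) (Ici 0) := by
  refine strictMonoOn_of_deriv_pos (convex_Ici 0)
    (hχ.continuous.comp (by fun_prop)).continuousOn fun t ht => ?_
  rw [interior_Ici, mem_Ioi] at ht
  rw [(hasDerivAt_comp_smul (hχ.differentiable two_ne_zero) y t).deriv]
  exact (mul_pos (mul_pos hlam (by positivity)) ht).trans_le
    (mul_le_fderiv_smul_apply hχ hdχ0 hHess y ht.le)

theorem half_mul_sq_norm_le (hχ : ContDiff ℝ 2 χ) (hχ0 : χ 0 = 0) (hdχ0 : fderiv ℝ χ 0 = 0)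
    (hHess : HessianLowerBound χ lam) (y : E) :
    lam / 2 * ‖y‖ ^ 2 ≤ χ y := by
  have hmono : MonotoneOn (fun t : ℝ => χ (t • y) - lam / 2 * ‖y‖ ^ 2 * t ^ 2) (Ici 0) := by
    refine monotoneOn_of_hasDerivWithinAt_nonneg (convex_Ici 0)
      ((hχ.continuous.comp (by fun_prop)).sub (by fun_prop)).continuousOn
      (f' := fun t => fderiv ℝ χ (t • y) y - lam * ‖y‖ ^ 2 * t) (fun t _ => ?_) fun t ht => ?_
    · have hsq : HasDerivAt (fun t : ℝ => lam / 2 * ‖y‖ ^ 2 * t ^ 2) (lam * ‖y‖ ^ 2 * t) t :=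
        ((hasDerivAt_pow 2 t).const_mul _).congr_deriv (by push_cast; ring)
      exact ((hasDerivAt_comp_smul (hχ.differentiable two_ne_zero) y t).sub hsq).hasDerivWithinAt
    · rw [interior_Ici, mem_Ioi] at ht
      exact sub_nonneg.2 (mul_le_fderiv_smul_apply hχ hdχ0 hHess y ht.le)
  simpa [hχ0] using hmono self_mem_Ici (mem_Ici.2 zero_le_one) zero_le_one

end Ray

theorem isCompact_sublevel_of_mul_sq_norm_le {E : Type*} [NormedAddCommGroup E] [ProperSpace E]
    {χ : E → ℝ} (hχ : Continuous χ) {m : ℝ} (hm : 0 < m) (hgrowth : ∀ y, m * ‖y‖ ^ 2 ≤ χ y)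
    (c : ℝ) : IsCompact {y | χ y ≤ c} := by
  refine (isCompact_closedBall (0 : E) √(c / m)).of_isClosed_subset
    (isClosed_le hχ continuous_const) fun y hy => ?_
  rw [mem_closedBall_zero_iff, le_sqrt (norm_nonneg y) (div_nonneg ?_ hm.le), le_div_iff₀ hm]
  · linarith [hgrowth y, show χ y ≤ c from hy]
  · nlinarith [hgrowth y, show χ y ≤ c from hy, norm_nonneg y]

theorem exists_homeomorph_of_bijOn {X Y : Type*} [TopologicalSpace X] [TopologicalSpace Y]
    [T2Space Y] {f : X → Y} {s : Set X} {t : Set Y} (hs : IsCompact s) (hf : ContinuousOn f s)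
    (hbij : BijOn f s t) : ∃ e : s ≃ₜ t, ∀ x : s, (e x : Y) = f x := by
  have := isCompact_iff_compactSpace.mp hs
  exact ⟨Continuous.homeoOfEquivCompactToT2 (f := hbij.equiv f) (hf.mapsToRestrict hbij.mapsTo),
    fun _ => rfl⟩

theorem smul_eq_self_of_norm_smul_eq {E : Type*} [NormedAddCommGroup E] [NormedSpace ℝ E]
    {r : ℝ} {x : E} (hr : 0 ≤ r) (hx : x ≠ 0) (h : ‖r • x‖ = ‖x‖) : r • x = x := by
  rw [norm_smul, norm_of_nonneg hr, mul_left_eq_self₀] at h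
  rcases h with rfl | h
  · exact one_smul ℝ x
  · exact absurd (norm_eq_zero.1 h) hx

section Chart

variable {E : Type*} [NormedAddCommGroup E] {χ : E → ℝ} {c c₂ : ℝ}

theorem mul_sq_norm_add_sub_pos (hc₂ : 0 < c₂) (h0 : χ 0 < c) {y : E} (hy : χ y ≤ c) :
    0 < c₂ * ‖y‖ ^ 2 + c - χ y := by
  rcases eq_or_ne y 0 with rfl | hy0
  · simpa using h0
  · have : 0 < c₂ * ‖y‖ ^ 2 := by positivity
    linarith

variable [NormedSpace ℝ E]

noncomputable def sublevelChart (χ : E → ℝ) (c c₂ : ℝ) (y : E) : E :=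
  (√c₂ / √(c₂ * ‖y‖ ^ 2 + c - χ y)) • y

theorem sublevelChart_zero : sublevelChart χ c c₂ 0 = 0 := smul_zero _

theorem sublevelChart_smul (t : ℝ) (y : E) : sublevelChart χ c c₂ (t • y) =
    (√c₂ / √(c₂ * ‖t • y‖ ^ 2 + c - χ (t • y)) * t) • y :=
  smul_smul _ _ _

theorem sq_norm_sublevelChart (hc₂ : 0 ≤ c₂) {y : E} (hQ : 0 ≤ c₂ * ‖y‖ ^ 2 + c - χ y) :
    ‖sublevelChart χ c c₂ y‖ ^ 2 = c₂ * ‖y‖ ^ 2 / (c₂ * ‖y‖ ^ 2 + c - χ y) := by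
  rw [sublevelChart, norm_smul, mul_pow, norm_div, norm_of_nonneg (sqrt_nonneg _),
    norm_of_nonneg (sqrt_nonneg _), div_pow, sq_sqrt hc₂, sq_sqrt hQ, div_mul_eq_mul_div]

theorem norm_sublevelChart_le_one_iff (hc₂ : 0 ≤ c₂) {y : E}
    (hQ : 0 < c₂ * ‖y‖ ^ 2 + c - χ y) : ‖sublevelChart χ c c₂ y‖ ≤ 1 ↔ χ y ≤ c := by
  rw [← sq_le_one_iff₀ (norm_nonneg _), sq_norm_sublevelChart hc₂ hQ.le, div_le_one hQ]
  constructor <;> intro <;> linarith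

theorem norm_sublevelChart_eq_one_iff (hc₂ : 0 ≤ c₂) {y : E}
    (hQ : 0 < c₂ * ‖y‖ ^ 2 + c - χ y) : ‖sublevelChart χ c c₂ y‖ = 1 ↔ χ y = c := by
  rw [← pow_eq_one_iff_of_nonneg (norm_nonneg _) two_ne_zero, sq_norm_sublevelChart hc₂ hQ.le,
    div_eq_one_iff_eq hQ.ne']
  constructor <;> intro <;> linarith

theorem continuousOn_sublevelChart (hχ : Continuous χ) :
    ContinuousOn (sublevelChart χ c c₂) {y | 0 < c₂ * ‖y‖ ^ 2 + c - χ y} :=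
  (continuousOn_const.div (by fun_prop) fun _ hy => (sqrt_pos.2 hy).ne').smul continuousOn_id

theorem strictMonoOn_norm_sublevelChart_smul (hc₂ : 0 < c₂) {y : E} (hy : y ≠ 0)
    (hray : StrictMonoOn (fun t : ℝ => χ (t • y)) (Ici 0)) :
    StrictMonoOn (fun t : ℝ => ‖sublevelChart χ c c₂ (t • y)‖) {t | 0 ≤ t ∧ χ (t • y) ≤ c} := by
  rintro s ⟨hs, -⟩ t ⟨ht, htc⟩ hst
  have hχst : χ (s • y) < χ (t • y) := hray hs ht hst
  have hnorm : ∀ r : ℝ, ‖r • y‖ ^ 2 = r ^ 2 * ‖y‖ ^ 2 := fun r => by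
    rw [norm_smul, mul_pow, norm_eq_abs, sq_abs]
  have hN : 0 < ‖y‖ ^ 2 := by positivity
  have ht₀ : 0 < t := hs.trans_lt hst
  have hts : s ^ 2 < t ^ 2 := by nlinarith
  have hQs : 0 < c₂ * (s ^ 2 * ‖y‖ ^ 2) + c - χ (s • y) := by
    have : 0 ≤ c₂ * (s ^ 2 * ‖y‖ ^ 2) := by positivity
    linarith
  have hQt : 0 < c₂ * (t ^ 2 * ‖y‖ ^ 2) + c - χ (t • y) := by
    have : 0 < c₂ * (t ^ 2 * ‖y‖ ^ 2) := by positivity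
    linarith
  refine lt_of_pow_lt_pow_left₀ 2 (norm_nonneg _) ?_
  rw [sq_norm_sublevelChart hc₂.le (by rw [hnorm]; exact hQs.le),
    sq_norm_sublevelChart hc₂.le (by rw [hnorm]; exact hQt.le), hnorm, hnorm,
    div_lt_div_iff₀ hQs hQt]
  -- `c - χ (r • y) ≥ 0` decreases strictly in `r` while `r ^ 2` increases
  have key : s ^ 2 * (c - χ (t • y)) < t ^ 2 * (c - χ (s • y)) := by
    nlinarith [mul_le_mul_of_nonneg_right hts.le (sub_nonneg.2 htc)]
  nlinarith [mul_lt_mul_of_pos_left key (mul_pos hc₂ hN)]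

theorem injOn_sublevelChart (hc₂ : 0 < c₂) (h0 : χ 0 < c)
    (hray : ∀ y : E, y ≠ 0 → StrictMonoOn (fun t : ℝ => χ (t • y)) (Ici 0)) :
    InjOn (sublevelChart χ c c₂) {y | χ y ≤ c} := by
  intro y₁ h₁ y₂ h₂ heq
  have hscale : ∀ y : E, χ y ≤ c → 0 < √c₂ / √(c₂ * ‖y‖ ^ 2 + c - χ y) := fun y hy =>
    div_pos (sqrt_pos.2 hc₂) (sqrt_pos.2 (mul_sq_norm_add_sub_pos hc₂ h0 hy))
  set a := (√c₂ / √(c₂ * ‖y₂‖ ^ 2 + c - χ y₂))⁻¹ * (√c₂ / √(c₂ * ‖y₁‖ ^ 2 + c - χ y₁))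
  have hy₂ : y₂ = a • y₁ := by
    rw [mul_smul, eq_inv_smul_iff₀ (hscale y₂ h₂).ne']
    exact heq.symm
  rcases eq_or_ne y₁ 0 with rfl | hy₁
  · simp [hy₂]
  have ha : 0 ≤ a := (mul_pos (inv_pos.2 (hscale y₂ h₂)) (hscale y₁ h₁)).le
  have ha1 : a = 1 := (strictMonoOn_norm_sublevelChart_smul (c := c) hc₂ hy₁ (hray y₁ hy₁)).injOn
    ⟨ha, by rw [← hy₂]; exact h₂⟩ ⟨zero_le_one, by rw [one_smul]; exact h₁⟩
    (by simp only [← hy₂, one_smul, heq])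
  rw [hy₂, ha1, one_smul]

theorem exists_pos_smul_eq_of_mul_sq_norm_le (hχ : Continuous χ) (h0 : χ 0 < c) {m : ℝ}
    (hm : 0 < m) (hgrowth : ∀ y, m * ‖y‖ ^ 2 ≤ χ y) {x : E} (hx : x ≠ 0) :
    ∃ T : ℝ, 0 < T ∧ χ (T • x) = c := by
  have hc : 0 < c := by simpa using (hgrowth 0).trans_lt h0
  have hlarge : c ≤ χ (√(c / (m * ‖x‖ ^ 2)) • x) := by
    refine le_trans (le_of_eq ?_) (hgrowth _)
    rw [norm_smul, mul_pow, norm_of_nonneg (sqrt_nonneg _), sq_sqrt (by positivity)]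
    field_simp
  obtain ⟨T, hT, hTc⟩ := intermediate_value_Icc (sqrt_nonneg _)
    (hχ.comp (by fun_prop : Continuous fun t : ℝ => t • x)).continuousOn
    (show c ∈ Icc (χ ((0 : ℝ) • x)) _ from ⟨by simpa using h0.le, hlarge⟩)
  refine ⟨T, hT.1.lt_of_ne ?_, hTc⟩
  rintro rfl
  simp only [Function.comp_apply, zero_smul] at hTc
  exact h0.ne hTc

theorem surjOn_sublevelChart (hχ : Continuous χ) (hc₂ : 0 < c₂) (h0 : χ 0 < c)
    (hray : ∀ y : E, y ≠ 0 → StrictMonoOn (fun t : ℝ => χ (t • y)) (Ici 0))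
    (hlevel : ∀ x : E, x ≠ 0 → ∃ T : ℝ, 0 < T ∧ χ (T • x) = c) :
    SurjOn (sublevelChart χ c c₂) {y | χ y ≤ c} (closedBall 0 1) := by
  intro x hx
  rw [mem_closedBall_zero_iff] at hx
  rcases eq_or_ne x 0 with rfl | hx0
  · exact ⟨0, h0.le, sublevelChart_zero⟩
  obtain ⟨T, hT, hTc⟩ := hlevel x hx0
  have hsub : ∀ t ∈ Icc 0 T, χ (t • x) ≤ c := fun t ht =>
    hTc ▸ (hray x hx0).monotoneOn ht.1 hT.le ht.2
  have hcont : ContinuousOn (fun t : ℝ => ‖sublevelChart χ c c₂ (t • x)‖) (Icc 0 T) :=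
    ((continuousOn_sublevelChart hχ).comp (by fun_prop : Continuous fun t : ℝ => t • x).continuousOn
      fun t ht => mul_sq_norm_add_sub_pos hc₂ h0 (hsub t ht)).norm
  have hTnorm : ‖sublevelChart χ c c₂ (T • x)‖ = 1 :=
    (norm_sublevelChart_eq_one_iff hc₂.le (mul_sq_norm_add_sub_pos hc₂ h0 hTc.le)).2 hTc
  obtain ⟨t, ht, hnorm : ‖sublevelChart χ c c₂ (t • x)‖ = ‖x‖⟩ :=
    intermediate_value_Icc hT.le hcont
    (show ‖x‖ ∈ Icc ‖sublevelChart χ c c₂ ((0 : ℝ) • x)‖ _ by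
      rw [zero_smul, sublevelChart_zero, norm_zero, hTnorm]
      exact ⟨norm_nonneg x, hx⟩)
  refine ⟨t • x, hsub t ht, ?_⟩
  rw [sublevelChart_smul] at hnorm ⊢
  exact smul_eq_self_of_norm_smul_eq
    (mul_nonneg (div_nonneg (sqrt_nonneg _) (sqrt_nonneg _)) ht.1) hx0 hnorm

theorem bijOn_sublevelChart (hχ : Continuous χ) (hc₂ : 0 < c₂) (h0 : χ 0 < c)
    (hray : ∀ y : E, y ≠ 0 → StrictMonoOn (fun t : ℝ => χ (t • y)) (Ici 0))
    (hlevel : ∀ x : E, x ≠ 0 → ∃ T : ℝ, 0 < T ∧ χ (T • x) = c) :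
    BijOn (sublevelChart χ c c₂) {y | χ y ≤ c} (closedBall 0 1) :=
  ⟨fun _ hy => mem_closedBall_zero_iff.2
      ((norm_sublevelChart_le_one_iff hc₂.le (mul_sq_norm_add_sub_pos hc₂ h0 hy)).2 hy),
    injOn_sublevelChart hc₂ h0 hray, surjOn_sublevelChart hχ hc₂ h0 hray hlevel⟩

theorem image_sublevelChart_level (hc₂ : 0 < c₂) (h0 : χ 0 < c)
    (hsurj : SurjOn (sublevelChart χ c c₂) {y | χ y ≤ c} (closedBall 0 1)) :
    sublevelChart χ c c₂ '' {y | χ y = c} = sphere 0 1 := by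
  ext x
  constructor
  · rintro ⟨y, hy : χ y = c, rfl⟩
    exact mem_sphere_zero_iff_norm.2
      ((norm_sublevelChart_eq_one_iff hc₂.le (mul_sq_norm_add_sub_pos hc₂ h0 hy.le)).2 hy)
  · intro hx
    rw [mem_sphere_zero_iff_norm] at hx
    obtain ⟨y, hy, rfl⟩ := hsurj (mem_closedBall_zero_iff.2 hx.le)
    exact ⟨y, (norm_sublevelChart_eq_one_iff hc₂.le (mul_sq_norm_add_sub_pos hc₂ h0 hy)).1 hx, rfl⟩

end Chart

/-- Change of coordinates in the First Step of the proof of Proposition 4.6: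
for a strictly convex `χ` with minimum `0` at the origin, the map
`F(y) = √c₂ · y / √(c₂‖y‖² + c − χ(y))` identifies the compact sublevel set
`{χ ≤ c}` with the closed unit ball, sending the level set `{χ = c}` onto the
unit sphere and the origin to the origin. -/
theorem stmt_13 (n : ℕ)
    (χ : EuclideanSpace ℝ (Fin n) → ℝ) (hχ : ContDiff ℝ 2 χ)
    (hχ0 : χ 0 = 0) (hdχ0 : fderiv ℝ χ 0 = 0)
    (lam : ℝ) (hlam : 0 < lam)
    (hHess : ∀ y u : EuclideanSpace ℝ (Fin n),
      lam * ‖u‖ ^ 2 ≤ fderiv ℝ (fderiv ℝ χ) y u u)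
    (c c₂ : ℝ) (hc : 0 < c) (hc₂ : 0 < c₂)
    (F : EuclideanSpace ℝ (Fin n) → EuclideanSpace ℝ (Fin n))
    (hF : ∀ y, F y = (Real.sqrt c₂ / Real.sqrt (c₂ * ‖y‖ ^ 2 + c - χ y)) • y) :
    IsCompact {y : EuclideanSpace ℝ (Fin n) | χ y ≤ c} ∧
    (∀ y ∈ {y : EuclideanSpace ℝ (Fin n) | χ y ≤ c},
      0 < c₂ * ‖y‖ ^ 2 + c - χ y) ∧
    (∃ e : {y : EuclideanSpace ℝ (Fin n) | χ y ≤ c} ≃ₜ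
        (Metric.closedBall (0 : EuclideanSpace ℝ (Fin n)) 1),
      ∀ y : {y : EuclideanSpace ℝ (Fin n) | χ y ≤ c},
        (e y : EuclideanSpace ℝ (Fin n)) = F y) ∧
    F '' {y : EuclideanSpace ℝ (Fin n) | χ y = c} =
      Metric.sphere (0 : EuclideanSpace ℝ (Fin n)) 1 ∧
    F 0 = 0 := by
  obtain rfl : F = sublevelChart χ c c₂ := funext hF
  have h0 : χ 0 < c := hχ0 ▸ hc
  have hpos : ∀ y ∈ {y | χ y ≤ c}, 0 < c₂ * ‖y‖ ^ 2 + c - χ y := fun _ hy =>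
    mul_sq_norm_add_sub_pos hc₂ h0 hy
  have hgrowth := half_mul_sq_norm_le hχ hχ0 hdχ0 hHess
  have hcomp := isCompact_sublevel_of_mul_sq_norm_le hχ.continuous (half_pos hlam) hgrowth c
  have hbij := bijOn_sublevelChart hχ.continuous hc₂ h0
    (fun _ hy => strictMonoOn_comp_smul hχ hdχ0 hlam hHess hy)
    (fun _ hx => exists_pos_smul_eq_of_mul_sq_norm_le hχ.continuous h0 (half_pos hlam) hgrowth hx)
  exact ⟨hcomp, hpos,
    exists_homeomorph_of_bijOn hcomp ((continuousOn_sublevelChart hχ.continuous).mono hpos) hbij,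
    image_sublevelChart_level hc₂ h0 hbij.surjOn, sublevelChart_zero⟩
end
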